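/- arXiv:2205.10836 — 6 statements merged into one kernel-verified Lean document; each statement's English description precedes it below -/
import Mathlib

section
/- Let I be a fair-goods instance with n >= 2 agents and items e_1, ..., e_m on a line, and fix an agent i. Let p be the smallest index such that v_i({e_1,...,e_p}) >= MMS_i(E, n) (such p exists since v_i(E) = 1 >= MMS_i(E, n)). Then MMS_i(E \ {e_1,...,e_p}, n-1) >= MMS_i(E, n); that is, removing the minimal prefix whose value reaches agent i's maximin share, together with one agent, does not decrease agent i's maximin share in the reduced instance. -/
open Finset

noncomputable section

/-- The value of a bundle `S` of items under additive (item-level) valuation `v`. -/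
def bundleVal {m : ℕ} (v : Fin m → ℝ) (S : Finset (Fin m)) : ℝ := ∑ e ∈ S, v e

/-- A bundle is connected if it is an interval of the line `e_1, …, e_m`. -/
def IsConnBundle {m : ℕ} (S : Finset (Fin m)) : Prop :=
  ∀ a ∈ S, ∀ c ∈ S, ∀ b : Fin m, a ≤ b → b ≤ c → b ∈ S

/-- A connected allocation: pairwise disjoint connected bundles covering all items. -/
def ConnAlloc (n m : ℕ) (A : Fin n → Finset (Fin m)) : Prop :=
  (∀ i, IsConnBundle (A i)) ∧
  (∀ i j : Fin n, i ≠ j → Disjoint (A i) (A j)) ∧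
  (∀ e : Fin m, ∃ i, e ∈ A i)

/-- The maximin share of an agent with valuation `v`: the maximum over connected
`n`-partitions of the minimum bundle value. -/
def mmsVal (n m : ℕ) (v : Fin m → ℝ) : ℝ :=
  sSup { x : ℝ | ∃ A : Fin n → Finset (Fin m), ConnAlloc n m A ∧ x = ⨅ j, bundleVal v (A j) }

/-- Utilitarian welfare of an allocation. -/
def utilW (n m : ℕ) (v : Fin n → Fin m → ℝ) (A : Fin n → Finset (Fin m)) : ℝ :=
  ∑ i, bundleVal (v i) (A i)

/-- Egalitarian welfare of an allocation. -/
def egalW (n m : ℕ) (v : Fin n → Fin m → ℝ) (A : Fin n → Finset (Fin m)) : ℝ :=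
  ⨅ i, bundleVal (v i) (A i)

/-- Optimal utilitarian welfare over all connected allocations. -/
def optU (n m : ℕ) (v : Fin n → Fin m → ℝ) : ℝ :=
  sSup { x : ℝ | ∃ A, ConnAlloc n m A ∧ x = utilW n m v A }

/-- Optimal egalitarian welfare over all connected allocations. -/
def optE (n m : ℕ) (v : Fin n → Fin m → ℝ) : ℝ :=
  sSup { x : ℝ | ∃ A, ConnAlloc n m A ∧ x = egalW n m v A }

/-- The maximin share of an agent with valuation `v` restricted to a subset `S` of the
items, with `k` bundles: the maximum over partitions of `S` into `k` connected
(pairwise disjoint) bundles of the minimum bundle value. -/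
def mmsValOn (k m : ℕ) (v : Fin m → ℝ) (S : Finset (Fin m)) : ℝ :=
  sSup { x : ℝ | ∃ A : Fin k → Finset (Fin m),
    (∀ j, IsConnBundle (A j)) ∧
    (∀ i j : Fin k, i ≠ j → Disjoint (A i) (A j)) ∧
    (∀ i, A i ⊆ S) ∧ (∀ e ∈ S, ∃ i, e ∈ A i) ∧
    x = ⨅ j, bundleVal v (A j) }

lemma mmsOn_set_finite (k m : ℕ) (v : Fin m → ℝ) (S : Finset (Fin m)) :
    { x : ℝ | ∃ A : Fin k → Finset (Fin m),
      (∀ j, IsConnBundle (A j)) ∧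
      (∀ i j : Fin k, i ≠ j → Disjoint (A i) (A j)) ∧
      (∀ i, A i ⊆ S) ∧ (∀ e ∈ S, ∃ i, e ∈ A i) ∧
      x = ⨅ j, bundleVal v (A j) }.Finite := by
  apply Set.Finite.subset (Set.finite_range
    (fun A : Fin k → Finset (Fin m) => ⨅ j, bundleVal v (A j)))
  rintro x ⟨A, _, _, _, _, rfl⟩
  exact ⟨A, rfl⟩

def skipFun (n : ℕ) (i0 : Fin n) (j : Fin (n-1)) : Fin n :=
  if j.val < i0.val then ⟨j.val, by have := j.isLt; omega⟩
  else ⟨j.val + 1, by have := j.isLt; omega⟩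

lemma skipFun_ne (n : ℕ) (i0 : Fin n) (j : Fin (n-1)) : skipFun n i0 j ≠ i0 := by
  unfold skipFun
  split <;> (intro h; apply_fun Fin.val at h; simp at h; omega)

lemma skipFun_inj (n : ℕ) (i0 : Fin n) : Function.Injective (skipFun n i0) := by
  intro a b h
  unfold skipFun at h
  apply_fun Fin.val at h
  split at h <;> split at h <;> (simp at h; exact Fin.ext (by omega))

lemma skipFun_surj (n : ℕ) (i0 : Fin n) (k : Fin n) (hk : k ≠ i0) :
    ∃ j, skipFun n i0 j = k := by
  have hi0 := i0.isLt
  have hkk := k.isLt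
  have hne : k.val ≠ i0.val := fun h => hk (Fin.ext h)
  by_cases h : k.val < i0.val
  · refine ⟨⟨k.val, by omega⟩, ?_⟩
    unfold skipFun
    rw [if_pos (by simpa using h)]
  · refine ⟨⟨k.val - 1, by omega⟩, ?_⟩
    unfold skipFun
    rw [if_neg (by simp; omega)]
    exact Fin.ext (by simp; omega)


/-- In a fair-goods instance with `n ≥ 2` agents, fix an agent with
valuation `v`, and let `p` be the smallest index such that the prefix `{e_1,…,e_p}`
has value at least `MMS(E, n)`.  Then the maximin share of the agent in the reduced
instance obtained by removing this prefix and one agent does not decrease: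
`MMS(E \ {e_1,…,e_p}, n-1) ≥ MMS(E, n)`. -/
theorem mms_reduction_prefix (n m : ℕ) (hn : 2 ≤ n)
    (v : Fin m → ℝ) (hpos : ∀ j, 0 ≤ v j)
    (hnorm : bundleVal v Finset.univ = 1)
    (p : Fin m)
    (hp : mmsValOn n m v Finset.univ ≤ bundleVal v (Finset.Iic p))
    (hpmin : ∀ q : Fin m, q < p → bundleVal v (Finset.Iic q) < mmsValOn n m v Finset.univ) :
    mmsValOn n m v Finset.univ ≤ mmsValOn (n - 1) m v (Finset.Iic p)ᶜ := by
  set μ := mmsValOn n m v Finset.univ with hμ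
  have hm : 0 < m := p.pos
  -- the defining set for μ, and that μ is attained
  have hsetne : { x : ℝ | ∃ A : Fin n → Finset (Fin m),
      (∀ j, IsConnBundle (A j)) ∧
      (∀ i j : Fin n, i ≠ j → Disjoint (A i) (A j)) ∧
      (∀ i, A i ⊆ (Finset.univ : Finset (Fin m))) ∧
      (∀ e ∈ (Finset.univ : Finset (Fin m)), ∃ i, e ∈ A i) ∧
      x = ⨅ j, bundleVal v (A j) }.Nonempty := by
    refine ⟨_, fun j : Fin n => if j = ⟨0, by omega⟩ then Finset.univ else ∅,
      ?_, ?_, ?_, ?_, rfl⟩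
    · intro j; by_cases h : j = ⟨0, by omega⟩ <;>
        simp [h, IsConnBundle]
    · intro i j hij
      by_cases h1 : i = ⟨0, by omega⟩ <;> by_cases h2 : j = ⟨0, by omega⟩ <;>
        simp_all
    · intro i; exact Finset.subset_univ _
    · intro e _; exact ⟨⟨0, by omega⟩, by simp⟩
  have hmem : μ ∈ { x : ℝ | ∃ A : Fin n → Finset (Fin m),
      (∀ j, IsConnBundle (A j)) ∧
      (∀ i j : Fin n, i ≠ j → Disjoint (A i) (A j)) ∧
      (∀ i, A i ⊆ (Finset.univ : Finset (Fin m))) ∧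
      (∀ e ∈ (Finset.univ : Finset (Fin m)), ∃ i, e ∈ A i) ∧
      x = ⨅ j, bundleVal v (A j) } := by
    rw [hμ, mmsValOn]
    exact hsetne.csSup_mem (mmsOn_set_finite n m v Finset.univ)
  obtain ⟨A, hconn, hdisj, hsub, hcov, hval⟩ := hmem
  have hμle : ∀ j, μ ≤ bundleVal v (A j) := by
    intro j
    rw [hval]
    exact ciInf_le (Set.finite_range _).bddBelow j
  -- the bundle containing item 0 is a prefix Iic q
  obtain ⟨i0, hi0⟩ := hcov ⟨0, hm⟩ (Finset.mem_univ _)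
  set q : Fin m := (A i0).max' ⟨⟨0, hm⟩, hi0⟩ with hq
  have hTq : A i0 = Finset.Iic q := by
    ext b
    rw [Finset.mem_Iic]
    constructor
    · exact fun hb => Finset.le_max' _ _ hb
    · intro hb
      exact hconn i0 ⟨0, hm⟩ hi0 q (Finset.max'_mem _ _) b
        (by simp [Fin.le_def]) hb
  have hpq : p ≤ q := by
    by_contra h
    push_neg at h
    have h1 := hμle i0
    rw [hTq] at h1
    exact absurd h1 (not_le.mpr (hpmin q h))
  -- all other bundles live strictly beyond q
  have houtside : ∀ j, j ≠ i0 → ∀ e ∈ A j, q < e := by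
    intro j hj e he
    by_contra h
    push_neg at h
    have : e ∈ A i0 := by rw [hTq]; exact Finset.mem_Iic.mpr h
    exact (Finset.disjoint_left.mp (hdisj j i0 hj) he) this
  -- choose the bundle k absorbing Ioc p q
  obtain ⟨k, hki0, hkr⟩ : ∃ k, k ≠ i0 ∧
      ∀ h : q.val + 1 < m, (⟨q.val + 1, h⟩ : Fin m) ∈ A k := by
    by_cases hq1 : q.val + 1 < m
    · obtain ⟨k, hkr⟩ := hcov ⟨q.val + 1, hq1⟩ (Finset.mem_univ _)
      refine ⟨k, ?_, fun _ => hkr⟩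
      rintro rfl
      rw [hTq, Finset.mem_Iic] at hkr
      have : q.val + 1 ≤ q.val := hkr
      omega
    · obtain ⟨k, hk⟩ := Fintype.exists_ne_of_one_lt_card
        (by simp only [Fintype.card_fin]; omega) i0
      exact ⟨k, hk, fun h => absurd h hq1⟩
  -- new allocation
  set A' : Fin (n-1) → Finset (Fin m) := fun j =>
    if skipFun n i0 j = k then A k ∪ Finset.Ioc p q else A (skipFun n i0 j) with hA'
  -- connectivity
  have hA'conn : ∀ j, IsConnBundle (A' j) := by
    intro j
    simp only [hA']
    split_ifs with h
    · intro a ha c hc b hab hbc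
      rw [Finset.mem_union] at ha hc ⊢
      by_cases hb : b ≤ q
      · rcases ha with ha | ha
        · have := houtside k hki0 a ha
          have h1 : q.val < a.val := this
          have h2 : a.val ≤ b.val := hab
          have h3 : b.val ≤ q.val := hb
          omega
        · right
          rw [Finset.mem_Ioc] at ha ⊢
          exact ⟨lt_of_lt_of_le ha.1 hab, hb⟩
      · push_neg at hb
        have hbv : q.val < b.val := hb
        have hq1 : q.val + 1 < m := by have := b.isLt; omega
        have hcA : c ∈ A k := by
          rcases hc with hc | hc
          · exact hc
          · rw [Finset.mem_Ioc] at hc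
            have h1 : c.val ≤ q.val := hc.2
            have h2 : b.val ≤ c.val := hbc
            omega
        left
        exact hconn k ⟨q.val + 1, hq1⟩ (hkr hq1) c hcA b (by rw [Fin.le_def]; simp; omega) hbc
    · exact hconn _
  -- disjointness
  have hIocsub : Finset.Ioc p q ⊆ A i0 := by
    rw [hTq]
    intro e he
    rw [Finset.mem_Ioc] at he
    exact Finset.mem_Iic.mpr he.2
  have hA'disj : ∀ j j' : Fin (n-1), j ≠ j' → Disjoint (A' j) (A' j') := by
    have key : ∀ l, l ≠ i0 → l ≠ k → Disjoint (A k ∪ Finset.Ioc p q) (A l) := by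
      intro l hl hlk
      rw [Finset.disjoint_union_left]
      refine ⟨hdisj k l (fun h => hlk h.symm), ?_⟩
      exact (hdisj i0 l (fun h => hl h.symm)).mono_left hIocsub
    intro j j' hjj
    have hs : skipFun n i0 j ≠ skipFun n i0 j' := fun h => hjj (skipFun_inj n i0 h)
    simp only [hA']
    split_ifs with h1 h2 h2
    · exact absurd (h1.trans h2.symm) hs
    · exact key _ (skipFun_ne n i0 j') (fun h => h2 h) |>.symm.symm
    · exact (key _ (skipFun_ne n i0 j) (fun h => h1 h)).symm
    · exact hdisj _ _ hs
  -- all new bundles avoid Iic p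
  have hA'sub : ∀ j, A' j ⊆ (Finset.Iic p)ᶜ := by
    intro j e he
    rw [Finset.mem_compl, Finset.mem_Iic]
    simp only [hA'] at he
    have : p < e := by
      split_ifs at he with h
      · rw [Finset.mem_union] at he
        rcases he with he | he
        · exact lt_of_le_of_lt hpq (houtside k hki0 e he)
        · exact (Finset.mem_Ioc.mp he).1
      · exact lt_of_le_of_lt hpq (houtside _ (skipFun_ne n i0 j) e he)
    exact not_le.mpr this
  -- covering
  have hA'cov : ∀ e ∈ (Finset.Iic p)ᶜ, ∃ j, e ∈ A' j := by
    intro e he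
    rw [Finset.mem_compl, Finset.mem_Iic] at he
    have hpe : p < e := not_le.mp he
    by_cases heq : e ≤ q
    · obtain ⟨j0, hj0⟩ := skipFun_surj n i0 k hki0
      refine ⟨j0, ?_⟩
      simp only [hA']
      simp only [hj0, if_pos]
      exact Finset.mem_union_right _ (Finset.mem_Ioc.mpr ⟨hpe, heq⟩)
    · push_neg at heq
      obtain ⟨k', hk'⟩ := hcov e (Finset.mem_univ e)
      have hk'i0 : k' ≠ i0 := by
        rintro rfl
        rw [hTq, Finset.mem_Iic] at hk'
        exact absurd hk' (not_le.mpr heq)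
      obtain ⟨j, hj⟩ := skipFun_surj n i0 k' hk'i0
      refine ⟨j, ?_⟩
      simp only [hA', hj]
      split_ifs with h
      · exact Finset.mem_union_left _ (h ▸ hk')
      · exact hk'
  -- value bound
  have hA'val : ∀ j, μ ≤ bundleVal v (A' j) := by
    intro j
    simp only [hA']
    split_ifs with h
    · refine le_trans (hμle k) ?_
      unfold bundleVal
      exact Finset.sum_le_sum_of_subset_of_nonneg Finset.subset_union_left
        (fun e _ _ => hpos e)
    · exact hμle _
  -- conclude
  haveI : Nonempty (Fin (n-1)) := ⟨⟨0, by omega⟩⟩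
  have hx : μ ≤ ⨅ j, bundleVal v (A' j) := le_ciInf hA'val
  refine le_trans hx ?_
  rw [mmsValOn]
  exact le_csSup (mmsOn_set_finite (n-1) m v (Finset.Iic p)ᶜ).bddAbove
    ⟨A', hA'conn, hA'disj, hA'sub, hA'cov, rfl⟩
end
end

section
/- For every fair-goods instance with n agents, there exists a connected allocation A that is MMS (v_i(A_i) >= MMS_i for every agent i) and has utilitarian welfare UW(A) >= 1/4. Consequently, since UW of any allocation is at most n under normalized valuations, the price of MMS with respect to utilitarian welfare for goods is at most 4n. -/
open Finset

noncomputable section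

/-!
Let `μ i` be agent `i`'s maximin share and fix a matching `r` of agents to items, each worth at
least `μ i` to its agent, of maximum total value `W`. An exchange argument bounds every `v l e`
by `μ l` plus what `l` and `e` contribute to `W`. Cutting the line greedily shows that `n * μ l`
is at least what remains of `l`'s value after her `n - 1` best items; together with the exchange
bound on those items and summed over all agents this gives `∑ μ i + W ≥ 1 / 2`.

Sweeping the line from left to right and always serving the agent content with the shortest
prefix (a matched agent once the prefix contains her item, any other agent once it is worth her
share) produces a connected allocation in which matched agents get their items and the others
their shares. Its welfare is at least `∑ μ i` and at least `W`, hence at least `1 / 4`.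
-/

section ConnectedAllocation

open Function

variable {n m : ℕ}

/-- Positions are `0`-based: `itemIco p q` is `{e_{p+1}, …, e_q}` in the numbering
`e_1, …, e_m`. -/
def itemIco (p q : ℕ) : Finset (Fin m) := univ.filter fun e => p ≤ (e : ℕ) ∧ (e : ℕ) < q

@[simp]
lemma mem_itemIco {p q : ℕ} {e : Fin m} :
    e ∈ (itemIco p q : Finset (Fin m)) ↔ p ≤ e ∧ e < q := by
  simp [itemIco]

lemma isConnBundle_itemIco (p q : ℕ) : IsConnBundle (itemIco p q : Finset (Fin m)) := by
  intro a ha c hc b hab hbc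
  simp only [mem_itemIco, Fin.le_def] at *
  omega

lemma itemIco_union_itemIco {p q r : ℕ} (hpq : p ≤ q) (hqr : q ≤ r) :
    (itemIco p q ∪ itemIco q r : Finset (Fin m)) = itemIco p r := by
  ext e
  simp only [mem_union, mem_itemIco]
  omega

lemma disjoint_itemIco {p q q' r : ℕ} (h : q ≤ q') :
    Disjoint (itemIco p q : Finset (Fin m)) (itemIco q' r) := by
  rw [disjoint_left]
  intro e he he'
  simp only [mem_itemIco] at he he'
  omega

lemma itemIco_zero_self : (itemIco 0 m : Finset (Fin m)) = univ := by
  ext e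
  simp

section BundleVal

variable {v : Fin m → ℝ}

lemma bundleVal_nonneg (hv : ∀ e, 0 ≤ v e) (S : Finset (Fin m)) : 0 ≤ bundleVal v S :=
  sum_nonneg fun e _ => hv e

lemma bundleVal_mono (hv : ∀ e, 0 ≤ v e) {S T : Finset (Fin m)} (h : S ⊆ T) :
    bundleVal v S ≤ bundleVal v T :=
  sum_le_sum_of_subset_of_nonneg h fun e _ _ => hv e

lemma le_bundleVal_of_mem (hv : ∀ e, 0 ≤ v e) {S : Finset (Fin m)} {e : Fin m} (he : e ∈ S) :
    v e ≤ bundleVal v S :=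
  single_le_sum (fun e _ => hv e) he

lemma bundleVal_itemIco_add {p q r : ℕ} (hpq : p ≤ q) (hqr : q ≤ r) :
    bundleVal v (itemIco p q) + bundleVal v (itemIco q r) = bundleVal v (itemIco p r) := by
  rw [← itemIco_union_itemIco hpq hqr, bundleVal, bundleVal, bundleVal,
    sum_union (disjoint_itemIco le_rfl)]

end BundleVal

def Packable (v : Fin m → ℝ) (τ : ℝ) (t p : ℕ) : Prop :=
  ∃ B : Fin t → Finset (Fin m), Pairwise (Disjoint on B) ∧
    ∀ k, IsConnBundle (B k) ∧ B k ⊆ itemIco p m ∧ τ ≤ bundleVal v (B k)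

namespace Packable

variable {v : Fin m → ℝ} {τ : ℝ} {t p : ℕ}

lemma of_nonpos (hτ : τ ≤ 0) : Packable v τ t p :=
  ⟨fun _ => ∅, fun _ _ _ => disjoint_empty_left _, fun _ =>
    ⟨fun _ h => absurd h (notMem_empty _), empty_subset _, by simpa [bundleVal] using hτ⟩⟩

lemma le_bundleVal_itemIco (hv : ∀ e, 0 ≤ v e) (h : Packable v τ (t + 1) p) :
    τ ≤ bundleVal v (itemIco p m) := by
  obtain ⟨B, -, hB⟩ := h
  exact (hB 0).2.2.trans (bundleVal_mono hv (hB 0).2.1)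

/-- A bundle reaching below `q` is not inside `itemIco p (q - 1)`, which is worth less than `τ`,
so by connectedness it contains item `q - 1`: at most one bundle is lost. -/
lemma drop_prefix (hv : ∀ e, 0 ≤ v e) (h : Packable v τ (t + 1) p) {q : ℕ} (hqm : q ≤ m)
    (hlt : ∀ q', p ≤ q' → q' < q → bundleVal v (itemIco p q') < τ) :
    Packable v τ t q := by
  obtain ⟨B, hdisj, hB⟩ := h
  suffices ∃ k₀, ∀ k, k ≠ k₀ → B k ⊆ itemIco q m by
    obtain ⟨k₀, hk₀⟩ := this
    exact ⟨B ∘ k₀.succAbove, hdisj.comp_of_injective Fin.succAbove_right_injective, fun k =>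
      ⟨(hB _).1, hk₀ _ (Fin.succAbove_ne k₀ k), (hB _).2.2⟩⟩
  by_cases hqp : q ≤ p
  · refine ⟨0, fun k _ e he => ?_⟩
    have := mem_itemIco.mp ((hB k).2.1 he)
    simp only [mem_itemIco]
    omega
  set c : Fin m := ⟨q - 1, by omega⟩
  have reach : ∀ k, ¬ B k ⊆ itemIco q m → c ∈ B k := by
    intro k hk
    obtain ⟨e, he, heq⟩ := not_subset.mp hk
    obtain ⟨e', he', he'c⟩ : ∃ e' ∈ B k, e' ∉ itemIco p (q - 1) := by
      by_contra! hsub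
      have := bundleVal_mono hv (fun e he => hsub e he)
      linarith [(hB k).2.2, hlt (q - 1) (by omega) (by omega)]
    have := mem_itemIco.mp ((hB k).2.1 he)
    have := mem_itemIco.mp ((hB k).2.1 he')
    simp only [mem_itemIco, not_and, not_lt] at heq he'c
    exact (hB k).1 e he e' he' c (Fin.le_def.mpr (by simp only [c]; omega))
      (Fin.le_def.mpr (he'c this.1))
  by_cases hc : ∃ k₀, c ∈ B k₀
  · obtain ⟨k₀, hk₀⟩ := hc
    exact ⟨k₀, fun k hk => by_contra fun hsub =>
      disjoint_left.mp (hdisj hk) (reach k hsub) hk₀⟩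
  · push Not at hc
    exact ⟨0, fun k _ => by_contra fun hsub => hc k (reach k hsub)⟩

end Packable

lemma Fin.pairwise_disjoint_cons {α : Type*} {t : ℕ} {S : Finset α} {B : Fin t → Finset α}
    (hB : Pairwise (Disjoint on B)) (hS : ∀ k, Disjoint S (B k)) :
    Pairwise (Disjoint on (Fin.cons S B : Fin (t + 1) → Finset α)) := by
  intro i j hij
  cases i using Fin.cases <;> cases j using Fin.cases
  · exact absurd rfl hij
  · exact hS _
  · exact (hS _).symm
  · exact hB fun h => hij (congrArg Fin.succ h)

/-- The shortest prefix worth `θ` is worth less than `θ` plus its last item, and that item is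
charged as one of the deleted items in the recursive call. -/
lemma packable_of_forall_card_lt {v : Fin m → ℝ} {θ : ℝ} (t p : ℕ)
    (h : ∀ T ⊆ itemIco p m, #T < t → bundleVal v T + t * θ ≤ bundleVal v (itemIco p m)) :
    Packable v θ t p := by
  induction t generalizing p with
  | zero => exact ⟨Fin.elim0, fun i => i.elim0, fun k => k.elim0⟩
  | succ t ih =>
  rcases le_or_gt θ 0 with hθ | hθ
  · exact Packable.of_nonpos hθ
  have hm : θ ≤ bundleVal v (itemIco p m) := by
    have := h ∅ (empty_subset _) (by simp)
    rw [show bundleVal v ∅ = 0 from sum_empty] at this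
    push_cast at this
    nlinarith [(Nat.cast_nonneg t : (0 : ℝ) ≤ t)]
  have hex : ∃ Q, θ ≤ bundleVal v (itemIco p Q) := ⟨m, hm⟩
  classical
  set Q := Nat.find hex
  have hQ : θ ≤ bundleVal v (itemIco p Q) := Nat.find_spec hex
  have hpQ : p < Q := by
    by_contra! hQp
    have : (itemIco p Q : Finset (Fin m)) = ∅ := by
      ext e; simp only [mem_itemIco, notMem_empty, iff_false]; omega
    simp [this, bundleVal] at hQ
    linarith
  have hQm : Q ≤ m := Nat.find_min' hex hm
  set c : Fin m := ⟨Q - 1, by omega⟩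
  have hc : bundleVal v (itemIco p (Q - 1)) < θ := not_le.mp (Nat.find_min hex (by omega))
  have hprefix : bundleVal v (itemIco p Q) = bundleVal v (itemIco p (Q - 1)) + v c := by
    have hlast : (itemIco (Q - 1) Q : Finset (Fin m)) = {c} := by
      ext e; simp only [mem_itemIco, mem_singleton, c, Fin.ext_iff]; omega
    rw [← bundleVal_itemIco_add (show p ≤ Q - 1 by omega) (show Q - 1 ≤ Q by omega), hlast,
      bundleVal, bundleVal, sum_singleton]
  obtain ⟨B, hdisj, hB⟩ : Packable v θ t Q := by
    refine ih Q fun T hT hcard => ?_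
    have hcT : c ∉ T := fun hc => by
      have := mem_itemIco.mp (hT hc); simp [c] at this; omega
    have hinsert := h (insert c T) (insert_subset (by simp [c]; omega) (hT.trans fun e he => by
      simp only [mem_itemIco] at he ⊢; omega)) (by rw [card_insert_of_notMem hcT]; omega)
    rw [bundleVal, sum_insert hcT, ← bundleVal_itemIco_add hpQ.le hQm, hprefix] at hinsert
    push_cast at hinsert
    unfold bundleVal at *
    linarith
  refine ⟨Fin.cons (itemIco p Q) B, Fin.pairwise_disjoint_cons hdisj
    fun k => disjoint_of_subset_right (hB k).2.1 (disjoint_itemIco le_rfl), fun k => ?_⟩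
  cases k using Fin.cases with
  | zero => exact ⟨isConnBundle_itemIco p Q, fun e he => by simp at he ⊢; omega, hQ⟩
  | succ k =>
    exact ⟨(hB k).1, (hB k).2.1.trans fun e he => by simp at he ⊢; omega, (hB k).2.2⟩

def IsConnAllocFrom (p : ℕ) (B : Fin n → Finset (Fin m)) : Prop :=
  (∀ i, IsConnBundle (B i)) ∧ (∀ i j, i ≠ j → Disjoint (B i) (B j)) ∧
    univ.biUnion B = itemIco p m

lemma isConnAllocFrom_self : IsConnAllocFrom m (fun _ : Fin n => (∅ : Finset (Fin m))) :=
  ⟨fun _ _ h => absurd h (notMem_empty _), fun _ _ _ => disjoint_empty_left _, by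
    ext e; simp⟩

lemma IsConnAllocFrom.update_itemIco {B : Fin n → Finset (Fin m)} {a : Fin n} {p q : ℕ}
    (hB : IsConnAllocFrom q B) (ha : B a = ∅) (hpq : p ≤ q) (hqm : q ≤ m) :
    IsConnAllocFrom p (update B a (itemIco p q)) := by
  obtain ⟨hconn, hdisj, hcover⟩ := hB
  have hfresh : ∀ k, Disjoint (itemIco p q) (B k) := fun k =>
    disjoint_of_subset_right (hcover ▸ subset_biUnion_of_mem B (mem_univ k))
      (disjoint_itemIco le_rfl)
  refine ⟨fun i => ?_, fun i j hij => ?_, ?_⟩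
  · rcases eq_or_ne i a with rfl | hia
    · simpa using isConnBundle_itemIco p q
    · simpa [hia] using hconn i
  · by_cases hia : i = a <;> by_cases hja : j = a
    · exact absurd (hia.trans hja.symm) hij
    · subst hia; simpa [hja] using hfresh j
    · subst hja; simpa [hia] using (hfresh i).symm
    · simpa [hia, hja] using hdisj i j hij
  · rw [← itemIco_union_itemIco hpq hqm, ← hcover]
    ext e
    simp only [mem_biUnion, mem_univ, true_and, mem_union, update_apply]
    constructor
    · rintro ⟨i, hi⟩
      split_ifs at hi
      exacts [Or.inl hi, Or.inr ⟨i, hi⟩]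
    · rintro (he | ⟨i, hi⟩)
      · exact ⟨a, by simpa using he⟩
      · refine ⟨i, ?_⟩
        rcases eq_or_ne i a with rfl | hia
        · simp [ha] at hi
        · simpa [hia] using hi

section Serving

variable (v : Fin n → Fin m → ℝ) (τ : Fin n → ℝ) (r : Fin n → Option (Fin m))

def Accepts (i : Fin n) (S : Finset (Fin m)) : Prop :=
  (r i).elim (τ i ≤ bundleVal (v i) S) (· ∈ S)

/-- The invariant of the left-to-right sweep serving the agents of `R` from position `p` on. -/
def CanServeFrom (R : Finset (Fin n)) (p : ℕ) : Prop :=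
  ∀ i ∈ R, (r i).elim (Packable (v i) (τ i) #R p) (fun e => p ≤ (e : ℕ))

variable {v τ r}

lemma Accepts.mono (hv : ∀ i e, 0 ≤ v i e) {i : Fin n} {S S' : Finset (Fin m)}
    (h : Accepts v τ r i S) (hS : S ⊆ S') : Accepts v τ r i S' := by
  rcases hri : r i with _ | e <;> simp only [Accepts, hri, Option.elim] at h ⊢
  exacts [h.trans (bundleVal_mono (hv i) hS), hS h]

lemma CanServeFrom.accepts_itemIco_self (hv : ∀ i e, 0 ≤ v i e) {R : Finset (Fin n)} {p : ℕ}
    (h : CanServeFrom v τ r R p) {i : Fin n} (hi : i ∈ R) : Accepts v τ r i (itemIco p m) := by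
  have hi' := h i hi
  rcases hri : r i with _ | e <;> simp only [Accepts, hri, Option.elim] at hi' ⊢
  · rw [← card_erase_add_one hi] at hi'
    exact hi'.le_bundleVal_itemIco (hv i)
  · simp [hi', e.isLt]

/-- Serve an agent content with the shortest prefix `itemIco p q`, preferring one with a reserved
item: then no other reserved item lies before `q`, and every other agent without one loses at
most one bundle of her packing. -/
lemma CanServeFrom.exists_accepts_itemIco (hv : ∀ i e, 0 ≤ v i e)
    (hinj : ∀ i j e, r i = some e → r j = some e → i = j) {R : Finset (Fin n)} {p : ℕ}
    (h : CanServeFrom v τ r R p) (hR : R.Nonempty) (hp : p ≤ m) :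
    ∃ a ∈ R, ∃ q, p ≤ q ∧ q ≤ m ∧ Accepts v τ r a (itemIco p q) ∧
      CanServeFrom v τ r (R.erase a) q := by
  classical
  obtain ⟨i₁, hi₁⟩ := hR
  have hex : ∃ q, p ≤ q ∧ ∃ i ∈ R, Accepts v τ r i (itemIco p q) :=
    ⟨m, hp, i₁, hi₁, h.accepts_itemIco_self hv hi₁⟩
  set q := Nat.find hex
  obtain ⟨hpq, i₀, hi₀, hacc₀⟩ := Nat.find_spec hex
  have hqm : q ≤ m := Nat.find_min' hex ⟨hp, i₀, hi₀, h.accepts_itemIco_self hv hi₀⟩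
  have hmin : ∀ q', p ≤ q' → q' < q → ∀ i ∈ R, ¬ Accepts v τ r i (itemIco p q') :=
    fun q' hpq' hq' i hi hacc => Nat.find_min hex hq' ⟨hpq', i, hi, hacc⟩
  have hpacked : ∀ a ∈ R, ∀ i ∈ R, r i = none → Packable (v i) (τ i) #(R.erase a) q := by
    intro a ha i hi hri
    have hi' := h i hi
    simp only [hri, Option.elim] at hi'
    rw [← card_erase_add_one ha] at hi'
    refine hi'.drop_prefix (hv i) hqm fun q' hpq' hq' => not_le.mp fun hle => ?_
    exact hmin q' hpq' hq' i hi (by simpa [Accepts, hri] using hle)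
  have hlate : ∀ i ∈ R, ∀ e : Fin m, r i = some e → q ≤ e + 1 := fun i hi e hre => by
    have hpe : p ≤ (e : ℕ) := by simpa [hre] using h i hi
    exact not_lt.mp fun hlt => hmin (e + 1) (by omega) hlt i hi (by simp [Accepts, hre, hpe])
  by_cases hres : ∃ a ∈ R, ∃ e, r a = some e ∧ (e : ℕ) < q
  · obtain ⟨a, ha, e, hae, heq⟩ := hres
    have hpe : p ≤ (e : ℕ) := by simpa [hae] using h a ha
    refine ⟨a, ha, q, hpq, hqm, by simp [Accepts, hae, hpe, heq], fun i hi => ?_⟩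
    obtain ⟨hia, hiR⟩ := mem_erase.mp hi
    rcases hri : r i with _ | e'
    · exact hpacked a ha i hiR hri
    · simp only [Option.elim]
      by_contra! he'q
      have := hlate a ha e hae
      have := hlate i hiR e' hri
      have hee' : e' = e := Fin.ext (by omega)
      exact hia (hinj i a e (hee' ▸ hri) hae)
  · push Not at hres
    refine ⟨i₀, hi₀, q, hpq, hqm, hacc₀, fun i hi => ?_⟩
    obtain ⟨-, hiR⟩ := mem_erase.mp hi
    rcases hri : r i with _ | e
    · exact hpacked i₀ hi₀ i hiR hri
    · exact hres i hiR e hri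

theorem CanServeFrom.exists_isConnAllocFrom (hv : ∀ i e, 0 ≤ v i e)
    (hinj : ∀ i j e, r i = some e → r j = some e → i = j) (R : Finset (Fin n)) {p : ℕ}
    (h : CanServeFrom v τ r R p) (hR : R.Nonempty) (hp : p ≤ m) :
    ∃ B, IsConnAllocFrom p B ∧ (∀ i ∉ R, B i = ∅) ∧
      ∀ i ∈ R, Accepts v τ r i (B i) := by
  induction R using Finset.strongInduction generalizing p with
  | H R ih =>
  obtain ⟨a, ha, q, hpq, hqm, hacc, hrest⟩ := h.exists_accepts_itemIco hv hinj hR hp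
  obtain ⟨q', B, hqq', hq'm, hB, hBR, hBacc, hacc'⟩ : ∃ q' B, q ≤ q' ∧ q' ≤ m ∧
      IsConnAllocFrom q' B ∧ (∀ i ∉ R.erase a, B i = ∅) ∧
      (∀ i ∈ R.erase a, Accepts v τ r i (B i)) ∧ Accepts v τ r a (itemIco p q') := by
    by_cases hne : (R.erase a).Nonempty
    · obtain ⟨B, hB, hBR, hBacc⟩ := ih _ (erase_ssubset ha) hrest hne hqm
      exact ⟨q, B, le_rfl, hqm, hB, hBR, hBacc, hacc⟩
    · exact ⟨m, fun _ => ∅, hqm, le_rfl, isConnAllocFrom_self, fun _ _ => rfl,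
        fun i hi => absurd ⟨i, hi⟩ hne, hacc.mono hv fun e he => by simp at he ⊢; omega⟩
  refine ⟨update B a (itemIco p q'),
    hB.update_itemIco (hBR a (notMem_erase a R)) (hpq.trans hqq') hq'm, fun i hi => ?_,
    fun i hi => ?_⟩
  · rw [update_of_ne (ne_of_mem_of_not_mem ha hi).symm]
    exact hBR i fun h => hi (mem_of_mem_erase h)
  · rcases eq_or_ne i a with rfl | hia
    · simpa using hacc'
    · simpa [hia] using hBacc i (mem_erase.mpr ⟨hia, hi⟩)

theorem exists_connAlloc_accepts (hv : ∀ i e, 0 ≤ v i e)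
    (hinj : ∀ i j e, r i = some e → r j = some e → i = j) (hn : 0 < n)
    (hpack : ∀ i, r i = none → Packable (v i) (τ i) n 0) :
    ∃ B, ConnAlloc n m B ∧ ∀ i, Accepts v τ r i (B i) := by
  have hstart : CanServeFrom v τ r univ 0 := by
    intro i _
    rcases hri : r i with _ | e
    · simpa [card_univ] using hpack i hri
    · exact Nat.zero_le _
  obtain ⟨B, ⟨hconn, hdisj, hcover⟩, -, hacc⟩ :=
    hstart.exists_isConnAllocFrom hv hinj univ ⟨⟨0, hn⟩, mem_univ _⟩ (Nat.zero_le m)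
  refine ⟨B, ⟨hconn, hdisj, fun e => ?_⟩, fun i => hacc i (mem_univ i)⟩
  have he : e ∈ univ.biUnion B := by simp [hcover]
  simpa using he

end Serving

section MaximinShare

variable {v : Fin m → ℝ} {θ : ℝ}

lemma Packable.exists_connAlloc (hv : ∀ e, 0 ≤ v e) (hn : 0 < n) (h : Packable v θ n 0) :
    ∃ A, ConnAlloc n m A ∧ ∀ i, θ ≤ bundleVal v (A i) :=
  exists_connAlloc_accepts (v := fun _ => v) (τ := fun _ => θ) (r := fun _ => none)
    (fun _ => hv) (fun _ _ _ h => nomatch h) hn fun _ _ => h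

lemma finite_mmsSet (v : Fin m → ℝ) :
    {x : ℝ | ∃ A : Fin n → Finset (Fin m), ConnAlloc n m A ∧
      x = ⨅ j, bundleVal v (A j)}.Finite :=
  (Set.finite_range fun A : Fin n → Finset (Fin m) => ⨅ j, bundleVal v (A j)).subset <| by
    rintro _ ⟨A, -, rfl⟩
    exact ⟨A, rfl⟩

lemma Packable.le_mmsVal (hv : ∀ e, 0 ≤ v e) (hn : 0 < n) (h : Packable v θ n 0) :
    θ ≤ mmsVal n m v := by
  have : Nonempty (Fin n) := ⟨⟨0, hn⟩⟩
  obtain ⟨A, hA, hθ⟩ := h.exists_connAlloc hv hn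
  exact (le_ciInf hθ).trans (le_csSup (finite_mmsSet v).bddAbove ⟨A, hA, rfl⟩)

lemma mmsVal_nonneg (hv : ∀ e, 0 ≤ v e) (hn : 0 < n) : 0 ≤ mmsVal n m v :=
  (Packable.of_nonpos le_rfl).le_mmsVal hv hn

lemma packable_mmsVal (hv : ∀ e, 0 ≤ v e) (hn : 0 < n) : Packable v (mmsVal n m v) n 0 := by
  obtain ⟨A₀, hA₀, -⟩ := (Packable.of_nonpos le_rfl).exists_connAlloc hv hn
  obtain ⟨A, ⟨hconn, hdisj, -⟩, hA⟩ :=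
    Set.Nonempty.csSup_mem (by exact ⟨_, A₀, hA₀, rfl⟩) (finite_mmsSet (n := n) v)
  refine ⟨A, fun i j hij => hdisj i j hij, fun k =>
    ⟨hconn k, by simp [itemIco_zero_self], ?_⟩⟩
  rw [mmsVal, hA]
  exact ciInf_le (Set.finite_range _).bddBelow k

lemma le_mmsVal_of_forall_card_lt (hv : ∀ e, 0 ≤ v e) (hn : 0 < n)
    (h : ∀ T : Finset (Fin m), #T < n → bundleVal v T + n * θ ≤ bundleVal v univ) :
    θ ≤ mmsVal n m v :=
  (packable_of_forall_card_lt n 0 fun T _ hT => by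
    simpa [itemIco_zero_self] using h T hT).le_mmsVal hv hn

end MaximinShare

section Reservation

variable (v : Fin n → Fin m → ℝ) (μ : Fin n → ℝ)

def IsReservation (r : Fin n → Option (Fin m)) : Prop :=
  (∀ i e, r i = some e → μ i ≤ v i e) ∧ ∀ i j e, r i = some e → r j = some e → i = j

def reservedValue (r : Fin n → Option (Fin m)) (i : Fin n) : ℝ := (r i).elim 0 (v i)

def reservedWelfare (r : Fin n → Option (Fin m)) : ℝ := ∑ i, reservedValue v r i

def itemLoad (r : Fin n → Option (Fin m)) (e : Fin m) : ℝ :=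
  ∑ i, if r i = some e then v i e else 0

lemma exists_isReservation_forall_le :
    ∃ r, IsReservation v μ r ∧
      ∀ r', IsReservation v μ r' → reservedWelfare v r' ≤ reservedWelfare v r := by
  classical
  obtain ⟨r, hr, hmax⟩ := (univ.filter (IsReservation v μ)).exists_max_image
    (reservedWelfare v) ⟨fun _ => none, by simp [IsReservation]⟩
  exact ⟨r, (mem_filter.mp hr).2, fun r' hr' => hmax r' (by simp [hr'])⟩

variable {v μ}

lemma reservedValue_nonneg (hv : ∀ i e, 0 ≤ v i e) (r : Fin n → Option (Fin m)) (i : Fin n) :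
    0 ≤ reservedValue v r i := by
  rcases hri : r i with _ | e <;> simp [reservedValue, hri, hv]

lemma itemLoad_nonneg (hv : ∀ i e, 0 ≤ v i e) (r : Fin n → Option (Fin m)) (e : Fin m) :
    0 ≤ itemLoad v r e :=
  sum_nonneg fun i _ => by split_ifs <;> simp [hv]

lemma sum_itemLoad (r : Fin n → Option (Fin m)) :
    ∑ e, itemLoad v r e = reservedWelfare v r := by
  simp only [itemLoad]
  rw [sum_comm]
  refine sum_congr rfl fun i _ => ?_
  rcases hri : r i with _ | e <;> simp [reservedValue, hri]

/-- Exchange argument: reserving `e` for `l` after freeing `l`'s item and `e` is again a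
reservation when `μ l ≤ v l e`, so by maximality `v l e` is at most the value freed. -/
lemma le_add_reservedValue_add_itemLoad (hv : ∀ i e, 0 ≤ v i e) (hμ : ∀ i, 0 ≤ μ i)
    {r : Fin n → Option (Fin m)} (hr : IsReservation v μ r)
    (hmax : ∀ r', IsReservation v μ r' → reservedWelfare v r' ≤ reservedWelfare v r)
    (l : Fin n) (e : Fin m) : v l e ≤ μ l + reservedValue v r l + itemLoad v r e := by
  classical
  have := reservedValue_nonneg hv r l
  have := itemLoad_nonneg hv r e
  rcases lt_or_ge (v l e) (μ l) with hlt | hle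
  · linarith
  set r' := update (fun i => if r i = some e then none else r i) l (some e)
  have hr'_eq :
      ∀ i f, r' i = some f → i = l ∧ f = e ∨ i ≠ l ∧ f ≠ e ∧ r i = some f := by
    intro i f h
    rcases eq_or_ne i l with rfl | hil
    · exact Or.inl ⟨rfl, by simpa [r'] using h.symm⟩
    · simp only [r', update_of_ne hil] at h
      split_ifs at h with hre
      exact Or.inr ⟨hil, fun hfe => hre (hfe ▸ h), h⟩
  have hr' : IsReservation v μ r' := by
    refine ⟨fun i f h => ?_, fun i j f hi hj => ?_⟩
    · rcases hr'_eq i f h with ⟨rfl, rfl⟩ | ⟨-, -, h⟩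
      exacts [hle, hr.1 i f h]
    · rcases hr'_eq i f hi with ⟨hil, hfe⟩ | ⟨-, hfe, hi⟩ <;>
        rcases hr'_eq j f hj with ⟨hjl, hfe'⟩ | ⟨-, hfe', hj⟩
      exacts [hil.trans hjl.symm, absurd hfe hfe', absurd hfe' hfe, hr.2 i j f hi hj]
  have hpt : ∀ i, reservedValue v r i ≤ reservedValue v r' i +
      (if i = l then reservedValue v r l - v l e else 0) +
      (if r i = some e then v i e else 0) := by
    intro i
    by_cases hil : i = l
    · subst hil
      split_ifs <;> simp_all [r', reservedValue]
    · by_cases hri : r i = some e <;> simp [r', reservedValue, hil, hri]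
  have hsum := sum_le_sum fun i (_ : i ∈ univ) => hpt i
  rw [sum_add_distrib, sum_add_distrib, sum_ite_eq' univ l] at hsum
  have := hmax r' hr'
  simp only [reservedWelfare, itemLoad, mem_univ, if_true] at *
  linarith [hμ l]

lemma bundleVal_le_card_mul_add (hv : ∀ i e, 0 ≤ v i e) (hμ : ∀ i, 0 ≤ μ i)
    {r : Fin n → Option (Fin m)} (hr : IsReservation v μ r)
    (hmax : ∀ r', IsReservation v μ r' → reservedWelfare v r' ≤ reservedWelfare v r)
    (l : Fin n) (T : Finset (Fin m)) :
    bundleVal (v l) T ≤ #T * (μ l + reservedValue v r l) + reservedWelfare v r :=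
  calc bundleVal (v l) T ≤ ∑ e ∈ T, (μ l + reservedValue v r l + itemLoad v r e) :=
        sum_le_sum fun e _ => le_add_reservedValue_add_itemLoad hv hμ hr hmax l e
    _ = #T * (μ l + reservedValue v r l) + ∑ e ∈ T, itemLoad v r e := by
        rw [sum_add_distrib, sum_const, nsmul_eq_mul]
    _ ≤ #T * (μ l + reservedValue v r l) + reservedWelfare v r := by
        rw [← sum_itemLoad]
        gcongr
        · exact fun e _ _ => itemLoad_nonneg hv r e
        · exact subset_univ T

lemma Accepts.le_bundleVal (hv : ∀ i e, 0 ≤ v i e) {r : Fin n → Option (Fin m)} {i : Fin n}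
    (hr : ∀ e, r i = some e → μ i ≤ v i e) {S : Finset (Fin m)} (h : Accepts v μ r i S) :
    μ i ≤ bundleVal (v i) S := by
  rcases hri : r i with _ | e <;> simp only [Accepts, hri, Option.elim] at h
  exacts [h, (hr e hri).trans (le_bundleVal_of_mem (hv i) h)]

lemma Accepts.reservedValue_le (hv : ∀ i e, 0 ≤ v i e) {r : Fin n → Option (Fin m)}
    {i : Fin n} {S : Finset (Fin m)} (h : Accepts v μ r i S) :
    reservedValue v r i ≤ bundleVal (v i) S := by
  rcases hri : r i with _ | e <;> simp only [Accepts, reservedValue, hri, Option.elim] at h ⊢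
  exacts [bundleVal_nonneg (hv i) S, le_bundleVal_of_mem (hv i) h]

end Reservation

/-- Greedy cutting gives `1 ≤ n * μ l + v l T` for the `n - 1` items `T` that agent `l` likes
best, and the exchange bound gives `v l T ≤ (n - 1) * (μ l + reservedValue v r l) + W`; summed
over the agents, `n ≤ (2 * n - 1) * (∑ μ + W)`. -/
lemma one_half_le_sum_mmsVal_add_reservedWelfare {v : Fin n → Fin m → ℝ} (hn : 0 < n)
    (hv : ∀ i e, 0 ≤ v i e) (hnorm : ∀ i, bundleVal (v i) univ = 1)
    {r : Fin n → Option (Fin m)} (hr : IsReservation v (fun i => mmsVal n m (v i)) r)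
    (hmax : ∀ r', IsReservation v (fun i => mmsVal n m (v i)) r' →
      reservedWelfare v r' ≤ reservedWelfare v r) :
    1 / 2 ≤ ∑ i, mmsVal n m (v i) + reservedWelfare v r := by
  set μ : Fin n → ℝ := fun i => mmsVal n m (v i)
  set W := reservedWelfare v r
  have hμ : ∀ i, 0 ≤ μ i := fun i => mmsVal_nonneg (hv i) hn
  have hn' : (1 : ℝ) ≤ n := by exact_mod_cast hn
  have hagent : ∀ l, 1 ≤ (n - 1) * (μ l + reservedValue v r l) + W + n * μ l := by
    intro l
    set X := (n - 1) * (μ l + reservedValue v r l) + W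
    have hX : 0 ≤ μ l + reservedValue v r l := add_nonneg (hμ l) (reservedValue_nonneg hv r l)
    have hθ := le_mmsVal_of_forall_card_lt (θ := (1 - X) / n) (hv l) hn fun T hT => by
      have hT' : (#T : ℝ) ≤ n - 1 := le_sub_iff_add_le.mpr (by exact_mod_cast hT)
      have := bundleVal_le_card_mul_add hv hμ hr hmax l T
      rw [hnorm, mul_div_cancel₀ _ (by positivity)]
      nlinarith
    rw [div_le_iff₀ (by positivity)] at hθ
    linarith
  have hsum := sum_le_sum fun l (_ : l ∈ univ) => hagent l
  simp only [sum_const, card_univ, Fintype.card_fin, nsmul_eq_mul, mul_one, sum_add_distrib,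
    ← mul_sum, mul_add] at hsum
  have : 0 ≤ ∑ i, μ i + W :=
    add_nonneg (sum_nonneg fun i _ => hμ i) (sum_nonneg fun i _ => reservedValue_nonneg hv r i)
  change (n : ℝ) ≤ _ + _ * W + _ + _ at hsum
  nlinarith

end ConnectedAllocation

/-- For every fair-goods instance with `n ≥ 1` agents, there exists a
connected allocation that is MMS fair and has utilitarian welfare at least `1/4`. -/
theorem goods_utilitarian_mms_exists (n m : ℕ) (hn : 1 ≤ n)
    (v : Fin n → Fin m → ℝ)
    (hpos : ∀ i j, 0 ≤ v i j)
    (hnorm : ∀ i, bundleVal (v i) Finset.univ = 1) :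
    ∃ A : Fin n → Finset (Fin m), ConnAlloc n m A ∧
      (∀ i, mmsVal n m (v i) ≤ bundleVal (v i) (A i)) ∧
      (1 / 4 : ℝ) ≤ utilW n m v A := by
  obtain ⟨r, hr, hmax⟩ := exists_isReservation_forall_le v fun i => mmsVal n m (v i)
  obtain ⟨A, hA, hacc⟩ :=
    exists_connAlloc_accepts hpos hr.2 hn fun i _ => packable_mmsVal (hpos i) hn
  have hmms : ∀ i, mmsVal n m (v i) ≤ bundleVal (v i) (A i) :=
    fun i => (hacc i).le_bundleVal hpos (hr.1 i)
  refine ⟨A, hA, hmms, ?_⟩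
  have hhalf := one_half_le_sum_mmsVal_add_reservedWelfare hn hpos hnorm hr hmax
  have hres : reservedWelfare v r ≤ utilW n m v A :=
    sum_le_sum fun i _ => (hacc i).reservedValue_le hpos
  have hmms_sum : ∑ i, mmsVal n m (v i) ≤ utilW n m v A := sum_le_sum fun i _ => hmms i
  linarith
end
end

section
/- Let k >= 2 be an integer and n = k^2. Consider the fair-goods instance with n agents and 2n goods e_1, ..., e_{2n} where: for each agent i with 1 <= i <= k, v_i(e_j) = 1/(2k) if 2(i-1)k + 1 <= j <= 2ik and v_i(e_j) = 0 otherwise; and for each agent i with k+1 <= i <= n, v_i(e_j) = 1/(2n) for all j. Then OPT_U >= k = sqrt(n), while every connected MMS allocation A satisfies UW(A) <= 2 - 1/k. Hence the price of MMS with respect to utilitarian welfare for goods is at least k/(2 - 1/k), i.e., Omega(sqrt(n)). -/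
open Finset

noncomputable section

/-- Generic block allocation. -/
noncomputable def blockAlloc (M c N : ℕ) : Fin N → Finset (Fin M) :=
  fun i => univ.filter (fun e => c * (i:ℕ) ≤ (e:ℕ) ∧ (e:ℕ) < c * ((i:ℕ)+1))

lemma mem_blockAlloc {M c N : ℕ} {i : Fin N} {e : Fin M} :
    e ∈ blockAlloc M c N i ↔ c * (i:ℕ) ≤ (e:ℕ) ∧ (e:ℕ) < c * ((i:ℕ)+1) := by
  simp [blockAlloc]

lemma blockAlloc_conn (M c N : ℕ) (hc : 0 < c) (hM : M ≤ c * N) :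
    ConnAlloc N M (blockAlloc M c N) := by
  refine ⟨?_, ?_, ?_⟩
  · intro i a ha b hb x hax hxb
    rw [mem_blockAlloc] at *
    exact ⟨le_trans ha.1 hax, lt_of_le_of_lt hxb hb.2⟩
  · intro i j hij
    rw [Finset.disjoint_left]
    intro e he1 he2
    rw [mem_blockAlloc] at he1 he2
    have hij' : (i:ℕ) ≠ (j:ℕ) := fun h => hij (Fin.ext h)
    rcases Nat.lt_or_ge (i:ℕ) (j:ℕ) with h | h
    · have : c * ((i:ℕ)+1) ≤ c * (j:ℕ) := Nat.mul_le_mul_left c h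
      linarith [he1.2, he2.1]
    · have h' : (j:ℕ) < (i:ℕ) := lt_of_le_of_ne h (Ne.symm hij')
      have : c * ((j:ℕ)+1) ≤ c * (i:ℕ) := Nat.mul_le_mul_left c h'
      linarith [he2.2, he1.1]
  · intro e
    have hiN : (e:ℕ) / c < N := by
      apply Nat.div_lt_of_lt_mul
      exact lt_of_lt_of_le e.isLt hM
    refine ⟨⟨(e:ℕ) / c, hiN⟩, ?_⟩
    rw [mem_blockAlloc]
    simp only [Nat.mul_add, mul_one]
    set t := c * ((e:ℕ) / c) with ht
    have hd : t + (e:ℕ) % c = (e:ℕ) := Nat.div_add_mod (e:ℕ) c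
    have hm : (e:ℕ) % c < c := Nat.mod_lt _ hc
    omega

lemma card_filter_Ico (M a b : ℕ) (hb : b ≤ M) :
    ((univ : Finset (Fin M)).filter (fun e : Fin M => a ≤ (e:ℕ) ∧ (e:ℕ) < b)).card = b - a := by
  have himg : ((univ : Finset (Fin M)).filter (fun e : Fin M => a ≤ (e:ℕ) ∧ (e:ℕ) < b)).image
      (fun e : Fin M => (e:ℕ)) = Finset.Ico a b := by
    ext x
    simp only [Finset.mem_image, mem_filter, mem_univ, true_and, Finset.mem_Ico]
    constructor
    · rintro ⟨e, ⟨h1, h2⟩, rfl⟩; exact ⟨h1, h2⟩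
    · rintro ⟨h1, h2⟩; exact ⟨⟨x, lt_of_lt_of_le h2 hb⟩, ⟨h1, h2⟩, rfl⟩
  rw [← Nat.card_Ico a b, ← himg, Finset.card_image_of_injective _ Fin.val_injective]

lemma card_filter_lt (M b : ℕ) (hb : b ≤ M) :
    ((univ : Finset (Fin M)).filter (fun e : Fin M => (e:ℕ) < b)).card = b := by
  have h := card_filter_Ico M 0 b hb
  simp only [Nat.zero_le, true_and, Nat.sub_zero] at h
  exact h

lemma card_blockAlloc {M c N : ℕ} (i : Fin N) (h : c * ((i:ℕ)+1) ≤ M) :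
    (blockAlloc M c N i).card = c := by
  unfold blockAlloc
  rw [card_filter_Ico M _ _ h, Nat.mul_add, mul_one, Nat.add_sub_cancel_left]

lemma blockAlloc_empty {M c N : ℕ} (i : Fin N) (h : M ≤ c * (i:ℕ)) :
    blockAlloc M c N i = ∅ := by
  ext e
  simp only [mem_blockAlloc, Finset.notMem_empty, iff_false]
  intro hc
  exact absurd (lt_of_lt_of_le e.isLt h) (not_lt.2 hc.1)

/-- The hard instance for Goods | Utilitarian | MMS: with `n = k²`
agents and `2n` goods as described, the optimal utilitarian welfare is at least
`k = √n`, while every connected MMS allocation has utilitarian welfare at most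
`2 - 1/k`. -/
theorem goods_utilitarian_mms_lower_bound (k : ℕ) (hk : 2 ≤ k) (n : ℕ) (hn : n = k ^ 2)
    (v : Fin n → Fin (2 * n) → ℝ)
    (hv1 : ∀ i : Fin n, (i : ℕ) < k → ∀ j : Fin (2 * n),
      v i j = if 2 * (i : ℕ) * k ≤ (j : ℕ) ∧ (j : ℕ) < 2 * ((i : ℕ) + 1) * k
              then 1 / (2 * (k : ℝ)) else 0)
    (hv2 : ∀ i : Fin n, k ≤ (i : ℕ) → ∀ j : Fin (2 * n), v i j = 1 / (2 * (n : ℝ))) :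
    (k : ℝ) ≤ optU n (2 * n) v ∧
    ∀ A : Fin n → Finset (Fin (2 * n)), ConnAlloc n (2 * n) A →
      (∀ i, mmsVal n (2 * n) (v i) ≤ bundleVal (v i) (A i)) →
      utilW n (2 * n) v A ≤ 2 - 1 / (k : ℝ) := by
  have hk0 : 0 < k := by omega
  have hkR : (0:ℝ) < (k:ℝ) := by exact_mod_cast hk0
  have hn0 : 0 < n := by rw [hn]; exact pow_pos hk0 2
  have hkn : k ≤ n := by rw [hn]; exact Nat.le_self_pow (by norm_num) k
  have hnR : (0:ℝ) < (n:ℝ) := by exact_mod_cast hn0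
  haveI : Nonempty (Fin n) := ⟨⟨0, hn0⟩⟩
  -- basic valuation facts
  have hnonneg : ∀ (i : Fin n) (j : Fin (2*n)), 0 ≤ v i j := by
    intro i j
    by_cases hi : (i:ℕ) < k
    · rw [hv1 i hi j]; split <;> positivity
    · rw [hv2 i (le_of_not_gt hi) j]; positivity
  have hle : ∀ (i : Fin n) (j : Fin (2*n)), v i j ≤ 1/(2*(k:ℝ)) := by
    intro i j
    by_cases hi : (i:ℕ) < k
    · rw [hv1 i hi j]; split
      · exact le_refl _
      · positivity
    · rw [hv2 i (le_of_not_gt hi) j]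
      apply one_div_le_one_div_of_le (by positivity)
      have : (k:ℝ) ≤ (n:ℝ) := by exact_mod_cast hkn
      linarith
  have hbval_nonneg : ∀ (i : Fin n) (S : Finset (Fin (2*n))), 0 ≤ bundleVal (v i) S :=
    fun i S => Finset.sum_nonneg fun j _ => hnonneg i j
  have hbound : ∀ (i : Fin n) (S : Finset (Fin (2*n))),
      bundleVal (v i) S ≤ (S.card : ℝ) / (2*(k:ℝ)) := by
    intro i S
    calc bundleVal (v i) S ≤ ∑ _e ∈ S, 1/(2*(k:ℝ)) :=
          Finset.sum_le_sum (fun e _ => hle i e)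
      _ = (S.card : ℝ) * (1/(2*(k:ℝ))) := by rw [Finset.sum_const, nsmul_eq_mul]
      _ = (S.card : ℝ) / (2*(k:ℝ)) := by ring
  have hcard_le : ∀ S : Finset (Fin (2*n)), (S.card : ℝ) ≤ 2*(n:ℝ) := by
    intro S
    have := Finset.card_le_univ S
    have h2 : S.card ≤ 2*n := by simpa using this
    exact_mod_cast h2
  have hbound2 : ∀ (i : Fin n) (S : Finset (Fin (2*n))),
      bundleVal (v i) S ≤ (2*(n:ℝ)) / (2*(k:ℝ)) := by
    intro i S
    refine le_trans (hbound i S) ?_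
    gcongr
    exact hcard_le S
  have hbval_unif : ∀ (i : Fin n), k ≤ (i:ℕ) → ∀ S : Finset (Fin (2*n)),
      bundleVal (v i) S = (S.card : ℝ) / (2*(n:ℝ)) := by
    intro i hi S
    calc bundleVal (v i) S = ∑ _e ∈ S, 1/(2*(n:ℝ)) :=
          Finset.sum_congr rfl (fun e _ => hv2 i hi e)
      _ = (S.card : ℝ) * (1/(2*(n:ℝ))) := by rw [Finset.sum_const, nsmul_eq_mul]
      _ = (S.card : ℝ) / (2*(n:ℝ)) := by ring
  -- Part 1
  have part1 : (k : ℝ) ≤ optU n (2*n) v := by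
    set B := blockAlloc (2*n) (2*k) n with hB
    have hBconn : ConnAlloc n (2*n) B :=
      blockAlloc_conn _ _ _ (by omega) (Nat.mul_le_mul_right n (by omega))
    have hBval : ∀ i : Fin n, bundleVal (v i) (B i) = if (i:ℕ) < k then (1:ℝ) else 0 := by
      intro i
      split
      next hi =>
        have hcard : (B i).card = 2*k := by
          apply card_blockAlloc
          calc 2*k*((i:ℕ)+1) ≤ 2*k*k := Nat.mul_le_mul_left _ hi
            _ = 2*n := by rw [hn]; ring
        have hval : ∀ e ∈ B i, v i e = 1/(2*(k:ℝ)) := by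
          intro e he
          rw [mem_blockAlloc] at he
          rw [hv1 i hi e, if_pos]
          have heq1 : 2*(i:ℕ)*k = 2*k*(i:ℕ) := by ring
          have heq2 : 2*((i:ℕ)+1)*k = 2*k*((i:ℕ)+1) := by ring
          rw [heq1, heq2]
          exact he
        calc bundleVal (v i) (B i) = ∑ _e ∈ B i, 1/(2*(k:ℝ)) :=
              Finset.sum_congr rfl hval
          _ = ((B i).card : ℝ) * (1/(2*(k:ℝ))) := by rw [Finset.sum_const, nsmul_eq_mul]
          _ = 1 := by rw [hcard]; push_cast; field_simp
      next hi =>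
        have hBempty : B i = ∅ := by
          apply blockAlloc_empty
          calc 2*n = 2*k*k := by rw [hn]; ring
            _ ≤ 2*k*(i:ℕ) := Nat.mul_le_mul_left _ (le_of_not_gt hi)
        rw [hBempty]
        simp [bundleVal]
    have hUW : utilW n (2*n) v B = (k:ℝ) := by
      unfold utilW
      rw [Finset.sum_congr rfl (fun i _ => hBval i)]
      rw [Finset.sum_boole]
      congr 1
      exact_mod_cast card_filter_lt n k hkn
    have hbdd : BddAbove { x : ℝ | ∃ A, ConnAlloc n (2*n) A ∧ x = utilW n (2*n) v A } := by
      refine ⟨(n:ℝ) * ((2*(n:ℝ)) / (2*(k:ℝ))), ?_⟩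
      rintro x ⟨A', _, rfl⟩
      unfold utilW
      calc ∑ i, bundleVal (v i) (A' i) ≤ ∑ _i : Fin n, (2*(n:ℝ)) / (2*(k:ℝ)) :=
            Finset.sum_le_sum (fun i _ => hbound2 i (A' i))
        _ = (n:ℝ) * ((2*(n:ℝ)) / (2*(k:ℝ))) := by
            rw [Finset.sum_const, nsmul_eq_mul]; simp
    exact le_csSup hbdd ⟨B, hBconn, hUW.symm⟩
  refine ⟨part1, ?_⟩
  -- Part 2
  intro A hA hmms
  obtain ⟨hAconn, hAdisj, hAcov⟩ := hA
  -- MMS lower bound for uniform agents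
  have hmmslb : ∀ i : Fin n, k ≤ (i:ℕ) → (1:ℝ)/(n:ℝ) ≤ mmsVal n (2*n) (v i) := by
    intro i hik
    have hpair : ConnAlloc n (2*n) (blockAlloc (2*n) 2 n) :=
      blockAlloc_conn _ _ _ (by omega) (le_refl _)
    have hpairval : ∀ j : Fin n, bundleVal (v i) (blockAlloc (2*n) 2 n j) = 1/(n:ℝ) := by
      intro j
      have hcard : (blockAlloc (2*n) 2 n j).card = 2 := by
        apply card_blockAlloc
        have := j.isLt
        omega
      rw [hbval_unif i hik, hcard]
      push_cast
      field_simp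
    have hmem : (1:ℝ)/(n:ℝ) ∈ { x : ℝ | ∃ A' : Fin n → Finset (Fin (2*n)),
        ConnAlloc n (2*n) A' ∧ x = ⨅ j, bundleVal (v i) (A' j) } := by
      refine ⟨blockAlloc (2*n) 2 n, hpair, ?_⟩
      have : (fun j : Fin n => bundleVal (v i) (blockAlloc (2*n) 2 n j))
          = fun _ : Fin n => 1/(n:ℝ) := funext hpairval
      rw [this]
      exact (ciInf_const).symm
    have hbddm : BddAbove { x : ℝ | ∃ A' : Fin n → Finset (Fin (2*n)),
        ConnAlloc n (2*n) A' ∧ x = ⨅ j, bundleVal (v i) (A' j) } := by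
      refine ⟨(2*(n:ℝ)) / (2*(k:ℝ)), ?_⟩
      rintro x ⟨A', _, rfl⟩
      have hbb : BddBelow (Set.range (fun j : Fin n => bundleVal (v i) (A' j))) := by
        refine ⟨0, ?_⟩
        rintro y ⟨j, rfl⟩
        exact hbval_nonneg i (A' j)
      refine le_trans (ciInf_le hbb ⟨0, hn0⟩) (hbound2 i _)
    exact le_csSup hbddm hmem
  -- each uniform agent needs at least 2 items
  have hcard2 : ∀ i : Fin n, k ≤ (i:ℕ) → 2 ≤ (A i).card := by
    intro i hik
    have h1 : (1:ℝ)/(n:ℝ) ≤ ((A i).card : ℝ) / (2*(n:ℝ)) := by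
      calc (1:ℝ)/(n:ℝ) ≤ mmsVal n (2*n) (v i) := hmmslb i hik
        _ ≤ bundleVal (v i) (A i) := hmms i
        _ = ((A i).card : ℝ) / (2*(n:ℝ)) := hbval_unif i hik (A i)
    have h2 : (2:ℝ) ≤ ((A i).card : ℝ) := by
      rw [div_le_div_iff₀ (by positivity) (by positivity)] at h1
      nlinarith
    exact_mod_cast h2
  -- total number of items
  have hsumcard : ∑ i : Fin n, (A i).card = 2*n := by
    have huniv : (univ : Finset (Fin (2*n))) = univ.biUnion A := by
      ext e
      simpa using hAcov e
    have := Finset.card_biUnion (s := (univ : Finset (Fin n))) (t := A)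
      (fun i _ j _ hij => hAdisj i j hij)
    rw [← huniv] at this
    simp only [Finset.card_univ, Fintype.card_fin] at this
    exact this.symm
  -- split the welfare sum
  set T : Finset (Fin n) := univ.filter (fun i : Fin n => (i:ℕ) < k) with hT
  set Tc : Finset (Fin n) := univ.filter (fun i : Fin n => ¬ (i:ℕ) < k) with hTc
  have hcardT : T.card = k := by rw [hT]; exact card_filter_lt n k hkn
  have hcardTc : Tc.card = n - k := by
    have h := Finset.card_filter_add_card_filter_not
      (s := (univ : Finset (Fin n))) (p := fun i : Fin n => (i:ℕ) < k)
    rw [← hT, ← hTc] at h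
    simp only [Finset.card_univ, Fintype.card_fin] at h
    omega
  have hsplitcard : ∑ i ∈ T, (A i).card + ∑ i ∈ Tc, (A i).card = 2*n := by
    rw [hT, hTc, Finset.sum_filter_add_sum_filter_not]
    exact hsumcard
  have hS2 : 2*(n-k) ≤ ∑ i ∈ Tc, (A i).card := by
    calc 2*(n-k) = Tc.card • 2 := by rw [hcardTc, smul_eq_mul]; omega
      _ ≤ ∑ i ∈ Tc, (A i).card := by
        apply Finset.card_nsmul_le_sum
        intro i hi
        rw [hTc, mem_filter] at hi
        exact hcard2 i (le_of_not_gt hi.2)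
  have hS1 : ∑ i ∈ T, (A i).card ≤ 2*k := by omega
  -- welfare bound
  have hsplitW : utilW n (2*n) v A
      = ∑ i ∈ T, bundleVal (v i) (A i) + ∑ i ∈ Tc, bundleVal (v i) (A i) := by
    rw [hT, hTc, Finset.sum_filter_add_sum_filter_not]
    rfl
  have hWT : ∑ i ∈ T, bundleVal (v i) (A i)
      ≤ ((∑ i ∈ T, (A i).card : ℕ) : ℝ) / (2*(k:ℝ)) := by
    push_cast
    rw [Finset.sum_div]
    exact Finset.sum_le_sum (fun i _ => hbound i (A i))
  have hWTc : ∑ i ∈ Tc, bundleVal (v i) (A i)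
      = ((∑ i ∈ Tc, (A i).card : ℕ) : ℝ) / (2*(n:ℝ)) := by
    push_cast
    rw [Finset.sum_div]
    apply Finset.sum_congr rfl
    intro i hi
    rw [hTc, mem_filter] at hi
    exact hbval_unif i (le_of_not_gt hi.2) (A i)
  set S1 : ℕ := ∑ i ∈ T, (A i).card with hS1def
  set S2 : ℕ := ∑ i ∈ Tc, (A i).card with hS2def
  have hs1R : (S1:ℝ) ≤ 2*(k:ℝ) := by exact_mod_cast hS1
  have hs12R : (S1:ℝ) + (S2:ℝ) = 2*(n:ℝ) := by exact_mod_cast hsplitcard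
  have hnkR : (n:ℝ) = (k:ℝ)^2 := by exact_mod_cast hn
  have hk2R : (2:ℝ) ≤ (k:ℝ) := by exact_mod_cast hk
  rw [hsplitW]
  calc ∑ i ∈ T, bundleVal (v i) (A i) + ∑ i ∈ Tc, bundleVal (v i) (A i)
      ≤ (S1:ℝ) / (2*(k:ℝ)) + (S2:ℝ) / (2*(n:ℝ)) := by
        linarith [hWT, hWTc.le]
    _ ≤ 2 - 1/(k:ℝ) := by
        rw [hnkR] at hs12R ⊢
        rw [div_add_div _ _ (by positivity) (by positivity),
          show (2:ℝ) - 1/(k:ℝ) = (2*(k:ℝ) - 1)/(k:ℝ) by field_simp,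
          div_le_div_iff₀ (by positivity) (by positivity)]
        nlinarith [mul_le_mul_of_nonneg_right hs1R
          (show (0:ℝ) ≤ 2*(k:ℝ)^2*((k:ℝ)-1) by nlinarith), hs12R]
end
end

section
/- For every fair-goods instance with n agents, there exists a connected MMS allocation A such that v_i(A_i) >= max{ MMS_i, OPT_E/(2n) } for every agent i; in particular EW(A) >= OPT_E/(2n), so the price of MMS with respect to egalitarian welfare for goods is at most 2n. -/
open Finset

noncomputable section

/-!
Moving knife, with `μ = OPT_E`, an egalitarian-optimal connected allocation `O`, and
`x = μ / (2n)`. Agent `i` demands `max MMS_i x`. A knife sweeps the line from the left; the agent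
whose demand is met first takes the swept piece and leaves, a tie being won by the agent whose
`O`-bundle contains the last item of the piece. While `k` agents remain, an agent with
`MMS_i ≥ x` can still cut the rest of the line into `k` pieces worth `MMS_i` to it, since its
stopping point lies beyond the cut. An agent with `MMS_i < x` loses at most `x` of its
`O`-bundle per round (the piece is worth less than `x` to it or, at a tie, misses its interval
`O_i`), so its bundle keeps value at least `μ - (n - k) x ≥ k x`; any `x ≤ μ / n` would do.
-/

namespace FairGoods

variable {m : ℕ}

def itemIco (m a b : ℕ) : Finset (Fin m) := univ.filter fun e => a ≤ (e : ℕ) ∧ (e : ℕ) < b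

@[simp]
lemma mem_itemIco {a b : ℕ} {e : Fin m} : e ∈ itemIco m a b ↔ a ≤ (e : ℕ) ∧ (e : ℕ) < b := by
  simp [itemIco]

lemma itemIco_self (a : ℕ) : itemIco m a a = ∅ := by
  ext e
  simp

lemma isConnBundle_itemIco (a b : ℕ) : IsConnBundle (itemIco m a b) := by
  intro x hx z hz y hxy hyz
  simp only [mem_itemIco, Fin.le_def] at *
  omega

lemma itemIco_subset_itemIco_left {a a' : ℕ} (h : a' ≤ a) (b : ℕ) :
    itemIco m a b ⊆ itemIco m a' b := by
  intro e
  simp only [mem_itemIco]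
  omega

lemma itemIco_subset_itemIco_self (a b : ℕ) : itemIco m a b ⊆ itemIco m a m := by
  intro e
  simp only [mem_itemIco]
  have := e.isLt
  omega

@[simp]
lemma bundleVal_empty (v : Fin m → ℝ) : bundleVal v ∅ = 0 := by
  simp [bundleVal]

lemma bundleVal_mono {v : Fin m → ℝ} (hv : ∀ e, 0 ≤ v e) {S T : Finset (Fin m)} (h : S ⊆ T) :
    bundleVal v S ≤ bundleVal v T :=
  sum_le_sum_of_subset_of_nonneg h fun e _ _ => hv e

lemma bundleVal_inter_itemIco_add (v : Fin m → ℝ) (O : Finset (Fin m)) {p r : ℕ} (h : p ≤ r) :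
    bundleVal v (O ∩ itemIco m p r) + bundleVal v (O ∩ itemIco m r m) =
      bundleVal v (O ∩ itemIco m p m) := by
  rw [bundleVal, bundleVal, ← sum_union]
  · congr 1
    ext e
    by_cases he : e ∈ O
    · simp only [mem_union, mem_inter, mem_itemIco, he, true_and]
      have := e.isLt
      omega
    · simp [he]
  · rw [disjoint_left]
    intro e he he'
    simp only [mem_inter, mem_itemIco] at he he'
    omega

def CanCut (v : Fin m → ℝ) (t : ℝ) : ℕ → ℕ → Prop
  | 0, _ => True
  | k + 1, p => ∃ q, p ≤ q ∧ t ≤ bundleVal v (itemIco m p q) ∧ CanCut v t k q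

section CanCut

variable {v : Fin m → ℝ} {t : ℝ}

lemma CanCut.anti (hv : ∀ e, 0 ≤ v e) {k q r : ℕ} (h : CanCut v t k q) (hrq : r ≤ q) :
    CanCut v t k r := by
  cases k with
  | zero => trivial
  | succ k =>
    obtain ⟨q', hqq', ht, hcut⟩ := h
    exact ⟨q', hrq.trans hqq', ht.trans (bundleVal_mono hv (itemIco_subset_itemIco_left hrq q')),
      hcut⟩

lemma CanCut.le_bundleVal (hv : ∀ e, 0 ≤ v e) {k p : ℕ} (h : CanCut v t (k + 1) p) :
    t ≤ bundleVal v (itemIco m p m) := by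
  obtain ⟨q, -, ht, -⟩ := h
  exact ht.trans (bundleVal_mono hv (itemIco_subset_itemIco_self p q))

lemma canCut_of_nonpos (ht : t ≤ 0) : ∀ k p, CanCut v t k p
  | 0, _ => trivial
  | k + 1, p => ⟨p, le_rfl, by simpa [itemIco_self] using ht, canCut_of_nonpos ht k p⟩

/-- Cutting at the right end of the bundle that ends first leaves the other bundles whole. -/
lemma canCut_of_pairwise_disjoint (hv : ∀ e, 0 ≤ v e) {ι : Type*} [DecidableEq ι]
    {B : ι → Finset (Fin m)} (hB : ∀ j, IsConnBundle (B j))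
    (hBd : ∀ i j, i ≠ j → Disjoint (B i) (B j)) (ht : ∀ j, t ≤ bundleVal v (B j)) :
    ∀ (S : Finset ι) (p : ℕ), (∀ j ∈ S, ∀ e ∈ B j, p ≤ (e : ℕ)) → CanCut v t S.card p := by
  rcases le_or_gt t 0 with ht0 | ht0
  · exact fun S p _ => canCut_of_nonpos ht0 S.card p
  have hne : ∀ j, (B j).Nonempty := fun j => nonempty_iff_ne_empty.2 fun h => by
    have := ht j
    rw [h, bundleVal_empty] at this
    linarith
  let rightEnd : ι → ℕ := fun j => (B j).sup fun e => (e : ℕ) + 1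
  have le_rightEnd : ∀ j, ∀ e ∈ B j, (e : ℕ) + 1 ≤ rightEnd j := fun j e he =>
    le_sup (f := fun e : Fin m => (e : ℕ) + 1) he
  intro S
  induction h : S.card generalizing S with
  | zero => exact fun _ _ => trivial
  | succ k ih =>
    intro p hp
    obtain ⟨j, hj, hmin⟩ := S.exists_min_image rightEnd (card_pos.1 (by omega))
    obtain ⟨b, hb, hbj⟩ : ∃ b ∈ B j, rightEnd j = b + 1 := (B j).exists_mem_eq_sup (hne j) _
    refine ⟨b + 1, (hp j hj b hb).trans b.val.le_succ, ?_, ?_⟩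
    · refine (ht j).trans (bundleVal_mono hv fun e he => mem_itemIco.2 ⟨hp j hj e he, ?_⟩)
      have := le_rightEnd j e he
      omega
    · refine ih (S.erase j) (by rw [card_erase_of_mem hj, h]; rfl) (b + 1) fun i hi e he => ?_
      obtain ⟨hij, hiS⟩ := mem_erase.1 hi
      obtain ⟨c, hc, hci⟩ : ∃ c ∈ B i, rightEnd i = c + 1 := (B i).exists_mem_eq_sup (hne i) _
      have hji : rightEnd j ≤ rightEnd i := hmin i hiS
      by_contra! heb
      have hbi : b ∈ B i := hB i e he c hc b (Fin.le_def.2 (by omega)) (Fin.le_def.2 (by omega))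
      exact disjoint_left.1 (hBd i j hij) hbi hb

end CanCut

/-- Where a knife moving right from `p` has first swept a piece worth `d` under `v`. -/
def knife (v : Fin m → ℝ) (d : ℝ) (p : ℕ) : ℕ :=
  sInf {q | p ≤ q ∧ d ≤ bundleVal v (itemIco m p q)}

section Knife

variable {v : Fin m → ℝ} {d : ℝ} {p : ℕ}

lemma knife_le {q : ℕ} (hpq : p ≤ q) (hd : d ≤ bundleVal v (itemIco m p q)) : knife v d p ≤ q :=
  Nat.sInf_le ⟨hpq, hd⟩

lemma le_knife_and_le_bundleVal (hp : p ≤ m) (hd : d ≤ bundleVal v (itemIco m p m)) :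
    p ≤ knife v d p ∧ d ≤ bundleVal v (itemIco m p (knife v d p)) :=
  Nat.sInf_mem (s := {q | p ≤ q ∧ d ≤ bundleVal v (itemIco m p q)}) ⟨m, hp, hd⟩

lemma bundleVal_lt_of_lt_knife {q : ℕ} (hpq : p ≤ q) (hq : q < knife v d p) :
    bundleVal v (itemIco m p q) < d :=
  not_le.1 fun hd => (knife_le hpq hd).not_gt hq

/-- A connected bundle reaching into the swept piece but missing its last item lies inside it,
so it would not be worth `d`. -/
lemma inter_itemIco_knife_eq_empty (hv : ∀ e, 0 ≤ v e) {O : Finset (Fin m)}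
    (hO : IsConnBundle O) (hd : d ≤ bundleVal v (O ∩ itemIco m p m))
    (hlast : ∀ w ∈ O, (w : ℕ) + 1 ≠ knife v d p) : O ∩ itemIco m p (knife v d p) = ∅ := by
  set K := knife v d p
  by_contra hne
  obtain ⟨e, he⟩ := nonempty_iff_ne_empty.2 hne
  simp only [mem_inter, mem_itemIco] at he
  have hsub : O ∩ itemIco m p m ⊆ itemIco m p (K - 1) := by
    intro c hc
    simp only [mem_inter, mem_itemIco] at hc ⊢
    refine ⟨hc.2.1, not_le.1 fun hKc => ?_⟩
    have hw : (⟨K - 1, by omega⟩ : Fin m) ∈ O :=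
      hO e he.1 c hc.1 _ (Fin.le_def.2 (by simp; omega)) (Fin.le_def.2 (by simpa using hKc))
    exact hlast _ hw (by simp only; omega)
  have := knife_le (by omega) (hd.trans (bundleVal_mono hv hsub))
  omega

end Knife

/-- The invariant of the moving-knife procedure for an agent with demand `d` and optimal bundle
`O`, while `k` agents remain to share the items from `p` on. -/
def Viable (v : Fin m → ℝ) (O : Finset (Fin m)) (x d : ℝ) (k p : ℕ) : Prop :=
  CanCut v d k p ∨ d ≤ x ∧ k * x ≤ bundleVal v (O ∩ itemIco m p m)

section Viable

variable {v : Fin m → ℝ} {O : Finset (Fin m)} {x d : ℝ} {k p : ℕ}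

lemma Viable.le_bundleVal (hv : ∀ e, 0 ≤ v e) (hx : 0 ≤ x) (h : Viable v O x d (k + 1) p) :
    d ≤ bundleVal v (itemIco m p m) := by
  rcases h with hcut | ⟨hdx, hO⟩
  · exact hcut.le_bundleVal hv
  · calc d ≤ x := hdx
      _ ≤ (k + 1 : ℕ) * x := le_mul_of_one_le_left hx (by norm_cast; omega)
      _ ≤ bundleVal v (O ∩ itemIco m p m) := hO
      _ ≤ bundleVal v (itemIco m p m) := bundleVal_mono hv inter_subset_right

/-- In the second case the bundle loses at most `x`: the piece taken is worth less than `d ≤ x`,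
or, at a tie, misses the bundle entirely. -/
lemma Viable.of_knife_le (hv : ∀ e, 0 ≤ v e) (hO : IsConnBundle O) (hx : 0 ≤ x)
    (h : Viable v O x d (k + 1) p) {r : ℕ} (hpr : p ≤ r) (hr : r ≤ knife v d p)
    (hlast : r = knife v d p → ∀ w ∈ O, (w : ℕ) + 1 ≠ r) : Viable v O x d k r := by
  rcases h with ⟨q, hpq, hdq, hcut⟩ | ⟨hdx, hOx⟩
  · exact Or.inl (hcut.anti hv (hr.trans (knife_le hpq hdq)))
  refine Or.inr ⟨hdx, ?_⟩
  have hloss : bundleVal v (O ∩ itemIco m p r) ≤ x := by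
    rcases hr.lt_or_eq with hlt | rfl
    · calc bundleVal v (O ∩ itemIco m p r) ≤ bundleVal v (itemIco m p r) :=
            bundleVal_mono hv inter_subset_right
        _ ≤ d := (bundleVal_lt_of_lt_knife hpr hlt).le
        _ ≤ x := hdx
    · have hd : d ≤ bundleVal v (O ∩ itemIco m p m) :=
        hdx.trans ((le_mul_of_one_le_left hx (by norm_cast; omega)).trans hOx)
      rw [inter_itemIco_knife_eq_empty hv hO hd (hlast rfl), bundleVal_empty]
      exact hx
  rw [← bundleVal_inter_itemIco_add v O hpr] at hOx
  push_cast at hOx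
  linarith

end Viable

/-- The owner of the item just left of `q js`, if any, is unique by disjointness; it is chosen
when it is a minimiser. -/
lemma exists_min_image_of_pairwise_disjoint {ι : Type*} (R : Finset ι) (hR : R.Nonempty)
    (q : ι → ℕ) {O : ι → Finset (Fin m)} (hO : ∀ i j, i ≠ j → Disjoint (O i) (O j)) :
    ∃ js ∈ R, (∀ j ∈ R, q js ≤ q j) ∧
      ∀ j ∈ R, j ≠ js → q j = q js → ∀ w ∈ O j, (w : ℕ) + 1 ≠ q js := by
  obtain ⟨j₀, hj₀, hmin⟩ := R.exists_min_image q hR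
  by_cases h : ∃ j ∈ R, q j = q j₀ ∧ ∃ w ∈ O j, (w : ℕ) + 1 = q j₀
  · obtain ⟨js, hjs, hq, w, hw, hwq⟩ := h
    refine ⟨js, hjs, hq ▸ hmin, fun j _ hne _ w' hw' hw'q => ?_⟩
    have : w' = w := Fin.ext (by omega)
    exact disjoint_left.1 (hO j js hne) (this ▸ hw') hw
  · push Not at h
    exact ⟨j₀, hj₀, hmin, fun j hj _ hq w hw => h j hj hq w hw⟩

def ConnAllocFrom {ι : Type*} (p : ℕ) (A : ι → Finset (Fin m)) : Prop :=
  (∀ j, IsConnBundle (A j)) ∧ (∀ i j, i ≠ j → Disjoint (A i) (A j)) ∧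
    ∀ e : Fin m, p ≤ (e : ℕ) ↔ ∃ j, e ∈ A j

section ConnAllocFrom

variable {ι : Type*}

lemma connAllocFrom_empty : ConnAllocFrom (ι := ι) m fun _ => (∅ : Finset (Fin m)) :=
  ⟨fun _ => by simp [IsConnBundle], fun _ _ _ => disjoint_empty_left _,
    fun e => by simp⟩

lemma ConnAllocFrom.update [DecidableEq ι] {A : ι → Finset (Fin m)} {p q : ℕ}
    (hA : ConnAllocFrom q A) {j : ι} (hj : A j = ∅) (hpq : p ≤ q) :
    ConnAllocFrom p (Function.update A j (itemIco m p q)) := by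
  obtain ⟨hconn, hdisj, hcover⟩ := hA
  have hge : ∀ i, ∀ e ∈ A i, q ≤ (e : ℕ) := fun i e he => (hcover e).2 ⟨i, he⟩
  have hdisj_itemIco : ∀ i, Disjoint (itemIco m p q) (A i) := fun i =>
    disjoint_left.2 fun e he he' => by
      have := hge i e he'
      simp only [mem_itemIco] at he
      omega
  refine ⟨fun i => ?_, fun i i' hii' => ?_, fun e => ?_⟩
  · rcases eq_or_ne i j with rfl | hij
    · simpa using isConnBundle_itemIco p q
    · simpa [hij] using hconn i
  · rcases eq_or_ne i j with rfl | hij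
    · simpa [hii'.symm] using hdisj_itemIco i'
    rcases eq_or_ne i' j with rfl | hi'j
    · simpa [hij] using (hdisj_itemIco i).symm
    · simpa [hij, hi'j] using hdisj i i' hii'
  · constructor
    · intro hpe
      by_cases heq : (e : ℕ) < q
      · exact ⟨j, by simp [hpe, heq]⟩
      · obtain ⟨i, hi⟩ := (hcover e).1 (by omega)
        have hij : i ≠ j := by rintro rfl; simp [hj] at hi
        exact ⟨i, by simpa [hij] using hi⟩
    · rintro ⟨i, hi⟩
      rcases eq_or_ne i j with rfl | hij
      · simp only [Function.update_self, mem_itemIco] at hi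
        exact hi.1
      · simp only [Function.update_of_ne hij] at hi
        exact hpq.trans (hge i e hi)

lemma ConnAllocFrom.connAlloc {n : ℕ} {A : Fin n → Finset (Fin m)} (hA : ConnAllocFrom 0 A) :
    ConnAlloc n m A :=
  ⟨hA.1, hA.2.1, fun e => (hA.2.2 e).1 (Nat.zero_le _)⟩

end ConnAllocFrom

/-- The moving-knife procedure: the agent whose knife stops first takes the swept piece, ties
broken by `exists_min_image_of_pairwise_disjoint`, and the last agent takes the rest. -/
theorem exists_connAllocFrom_of_viable {ι : Type*} [DecidableEq ι] (v : ι → Fin m → ℝ)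
    (hv : ∀ i e, 0 ≤ v i e) (O : ι → Finset (Fin m)) (hO : ∀ i, IsConnBundle (O i))
    (hOd : ∀ i j, i ≠ j → Disjoint (O i) (O j)) {x : ℝ} (hx : 0 ≤ x) (d : ι → ℝ) :
    ∀ (k : ℕ) (R : Finset ι) (p : ℕ), R.card = k + 1 → p ≤ m →
      (∀ j ∈ R, Viable (v j) (O j) x (d j) (k + 1) p) →
      ∃ A, ConnAllocFrom p A ∧ (∀ j ∉ R, A j = ∅) ∧ ∀ j ∈ R, d j ≤ bundleVal (v j) (A j) := by
  intro k
  induction k with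
  | zero =>
    intro R p hR hp hviable
    obtain ⟨j, rfl⟩ := card_eq_one.1 hR
    refine ⟨Function.update (fun _ => ∅) j (itemIco m p m),
      connAllocFrom_empty.update rfl hp, fun i hi => ?_, fun i hi => ?_⟩
    · rw [Function.update_of_ne (notMem_singleton.1 hi)]
    · obtain rfl := mem_singleton.1 hi
      rw [Function.update_self]
      exact (hviable i hi).le_bundleVal (hv i) hx
  | succ k ih =>
    intro R p hR hp hviable
    have hd : ∀ j ∈ R, d j ≤ bundleVal (v j) (itemIco m p m) := fun j hj =>
      (hviable j hj).le_bundleVal (hv j) hx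
    obtain ⟨js, hjs, hmin, htie⟩ := exists_min_image_of_pairwise_disjoint R
      (card_pos.1 (by omega)) (fun j => knife (v j) (d j) p) hOd
    set r := knife (v js) (d js) p
    obtain ⟨hpr, hdr⟩ := le_knife_and_le_bundleVal hp (hd js hjs)
    have hrm : r ≤ m := knife_le hp (hd js hjs)
    obtain ⟨A, hA, hAout, hAval⟩ := ih (R.erase js) r
      (by rw [card_erase_of_mem hjs, hR]; rfl) hrm fun j hj =>
        (hviable j (mem_of_mem_erase hj)).of_knife_le (hv j) (hO j) hx hpr
          (hmin j (mem_of_mem_erase hj)) fun hq =>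
            htie j (mem_of_mem_erase hj) (ne_of_mem_erase hj) hq.symm
    refine ⟨Function.update A js (itemIco m p r),
      hA.update (hAout js (notMem_erase js R)) hpr, fun j hj => ?_, fun j hj => ?_⟩
    · have hne : j ≠ js := by rintro rfl; exact hj hjs
      rw [Function.update_of_ne hne]
      exact hAout j fun h => hj (mem_of_mem_erase h)
    · rcases eq_or_ne j js with rfl | hne
      · rw [Function.update_self]
        exact hdr
      · rw [Function.update_of_ne hne]
        exact hAval j (mem_erase.2 ⟨hne, hj⟩)

lemma exists_connAlloc_sSup_le {n : ℕ} (hn : 1 ≤ n) (w : Fin n → Fin m → ℝ) :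
    ∃ A, ConnAlloc n m A ∧ ∀ j,
      sSup {x | ∃ A, ConnAlloc n m A ∧ x = ⨅ j, bundleVal (w j) (A j)} ≤ bundleVal (w j) (A j) := by
  set S := {x | ∃ A, ConnAlloc n m A ∧ x = ⨅ j, bundleVal (w j) (A j)}
  have hS : S.Nonempty :=
    ⟨_, _, (connAllocFrom_empty.update (j := ⟨0, hn⟩) rfl (Nat.zero_le m)).connAlloc, rfl⟩
  have hfin : S.Finite := (Set.finite_range fun A : Fin n → Finset (Fin m) =>
    ⨅ j, bundleVal (w j) (A j)).subset fun x ⟨A, _, hx⟩ => ⟨A, hx.symm⟩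
  obtain ⟨A, hA, hsup⟩ := hS.csSup_mem hfin
  exact ⟨A, hA, fun j => hsup ▸ ciInf_le (Set.finite_range _).bddBelow j⟩

lemma canCut_mmsVal {n : ℕ} (hn : 1 ≤ n) {w : Fin m → ℝ} (hw : ∀ e, 0 ≤ w e) :
    CanCut w (mmsVal n m w) n 0 := by
  obtain ⟨B, hB, hBw⟩ := exists_connAlloc_sSup_le hn fun _ => w
  have hcut := canCut_of_pairwise_disjoint hw hB.1 hB.2.1 hBw univ 0 (by simp)
  rwa [card_univ, Fintype.card_fin] at hcut

lemma optE_nonneg {n : ℕ} {v : Fin n → Fin m → ℝ} (hv : ∀ i e, 0 ≤ v i e) : 0 ≤ optE n m v :=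
  Real.sSup_nonneg fun _ ⟨_, _, hA⟩ => hA ▸ Real.iInf_nonneg fun i => sum_nonneg fun e _ => hv i e

end FairGoods

open FairGoods

theorem goods_egalitarian_mms_exists_general (n m : ℕ) (hn : 1 ≤ n)
    (v : Fin n → Fin m → ℝ)
    (hpos : ∀ i j, 0 ≤ v i j) :
    ∃ A : Fin n → Finset (Fin m), ConnAlloc n m A ∧
      ∀ i, max (mmsVal n m (v i)) (optE n m v / (2 * n)) ≤ bundleVal (v i) (A i) := by
  set x := optE n m v / (2 * n)
  have hx : 0 ≤ x := by
    have := optE_nonneg hpos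
    positivity
  have hnx : n * x ≤ optE n m v := by
    have : (n : ℝ) * x = optE n m v / 2 := by simp only [x]; field_simp
    linarith [optE_nonneg hpos]
  obtain ⟨O, hO, hOμ⟩ := exists_connAlloc_sSup_le hn v
  have hviable : ∀ i, Viable (v i) (O i) x (max (mmsVal n m (v i)) x) n 0 := by
    intro i
    rcases le_total x (mmsVal n m (v i)) with hrich | hpoor
    · exact Or.inl (by rw [max_eq_left hrich]; exact canCut_mmsVal hn (hpos i))
    · refine Or.inr ⟨(max_eq_right hpoor).le, hnx.trans ?_⟩
      rw [inter_eq_left.2 fun e _ => by simp]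
      exact hOμ i
  obtain ⟨A, hA, -, hAv⟩ := exists_connAllocFrom_of_viable v hpos O hO.1 hO.2.1 hx _ (n - 1) univ 0
    (by simp; omega) (Nat.zero_le m) fun i _ => by rw [Nat.sub_add_cancel hn]; exact hviable i
  exact ⟨A, hA.connAlloc, fun i => hAv i (mem_univ i)⟩

/-- For every fair-goods instance there is a connected MMS allocation in
which every agent's value is at least `max (MMS_i) (OPT_E / (2n))`; in particular its
egalitarian welfare is at least `OPT_E / (2n)`. -/
theorem goods_egalitarian_mms_exists (n m : ℕ) (hn : 1 ≤ n)
    (v : Fin n → Fin m → ℝ)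
    (hpos : ∀ i j, 0 ≤ v i j)
    (hnorm : ∀ i, bundleVal (v i) Finset.univ = 1) :
    ∃ A : Fin n → Finset (Fin m), ConnAlloc n m A ∧
      ∀ i, max (mmsVal n m (v i)) (optE n m v / (2 * n)) ≤ bundleVal (v i) (A i) :=
  goods_egalitarian_mms_exists_general n m hn v hpos
end
end

section
/- Let k >= 2 be an integer and n = k^2. Consider the fair-goods instance with n agents and n + 1 goods e_1, ..., e_{n+1} where: for each agent i with 1 <= i <= k, v_i(e_j) = 1/k if (i-1)k + 1 <= j <= ik and v_i(e_j) = 0 otherwise; and for each agent i with k+1 <= i <= n, v_i(e_j) = 1/(n+1) for all j. Then OPT_U >= k + 1/(n+1), while every connected PROP1 allocation A satisfies UW(A) <= 2 - (k-1)/(k(n+1)). Hence the price of PROP1 with respect to utilitarian welfare for goods is Omega(sqrt(n)). -/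
/-! The optimum gives each of the first `k` agents its own block of `k` items, worth `1` to it,
and the last item to a uniform agent. In a PROP1 allocation, on the other hand, a uniform agent
with an empty bundle could reach only `1/(n+1) < 1/n` by adding one item, so each of the `n - k`
uniform agents holds an item. The first `k` agents therefore share at most `k + 1` items, each
worth at most `1/k` to its owner, and every other item contributes `1/(n+1)`. -/

open Finset

noncomputable section

/-- A connected allocation of goods is PROP1 if every agent either already has value at
least `1/n`, or gets value at least `1/n` after adding one item keeping connectivity. -/
def Prop1Goods (n m : ℕ) (v : Fin n → Fin m → ℝ) (A : Fin n → Finset (Fin m)) : Prop :=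
  ∀ i, (1 / (n : ℝ)) ≤ bundleVal (v i) (A i) ∨
    ∃ e : Fin m, e ∉ A i ∧ IsConnBundle (insert e (A i)) ∧
      (1 / (n : ℝ)) ≤ bundleVal (v i) (insert e (A i))

section Allocations

variable {n m : ℕ}

lemma bundleVal_le_card_mul {v : Fin m → ℝ} {S : Finset (Fin m)} {c : ℝ}
    (h : ∀ e ∈ S, v e ≤ c) : bundleVal v S ≤ #S * c := by
  simpa [bundleVal] using sum_le_card_nsmul S v c h

lemma utilW_le_optU (v : Fin n → Fin m → ℝ) {A : Fin n → Finset (Fin m)}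
    (hA : ConnAlloc n m A) : utilW n m v A ≤ optU n m v := by
  refine le_csSup ((Set.finite_range (utilW n m v)).bddAbove.mono ?_) ⟨A, hA, rfl⟩
  rintro _ ⟨B, -, rfl⟩
  exact ⟨B, rfl⟩

lemma ConnAlloc.sum_card_eq {A : Fin n → Finset (Fin m)} (hA : ConnAlloc n m A) :
    ∑ i, #(A i) = m := by
  classical
  have hcover : univ.biUnion A = univ :=
    eq_univ_of_forall fun e => mem_biUnion.2 <| (hA.2.2 e).imp fun i hi => ⟨mem_univ i, hi⟩
  rw [← card_biUnion fun i _ j _ hij => hA.2.1 i j hij, hcover, card_univ, Fintype.card_fin]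

lemma Prop1Goods.nonempty {v : Fin n → Fin m → ℝ} {A : Fin n → Finset (Fin m)}
    (hP : Prop1Goods n m v A) (i : Fin n) (hsmall : ∀ e, v i e < 1 / n) : (A i).Nonempty := by
  rw [nonempty_iff_ne_empty]
  intro hempty
  have hn : (0 : ℝ) < 1 / n := by
    have : 0 < n := Fin.pos i
    positivity
  rcases hP i with h | ⟨e, -, -, h⟩
  · simp only [hempty, bundleVal, sum_empty] at h
    linarith
  · simp only [hempty, insert_empty_eq, bundleVal, sum_singleton] at h
    linarith [hsmall e]

lemma Prop1Goods.sum_card_add_card_compl_le {v : Fin n → Fin m → ℝ}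
    {A : Fin n → Finset (Fin m)} (hP : Prop1Goods n m v A) (hA : ConnAlloc n m A)
    (T : Finset (Fin n)) (hsmall : ∀ i ∉ T, ∀ e, v i e < 1 / n) :
    ∑ i ∈ T, #(A i) + #Tᶜ ≤ m := calc
  ∑ i ∈ T, #(A i) + #Tᶜ = ∑ i ∈ T, #(A i) + ∑ i ∈ Tᶜ, 1 := by rw [card_eq_sum_ones]
  _ ≤ ∑ i ∈ T, #(A i) + ∑ i ∈ Tᶜ, #(A i) := by
    gcongr with i hi
    exact card_pos.2 <| hP.nonempty i <| hsmall i (mem_compl.1 hi)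
  _ = m := by rw [sum_add_sum_compl, hA.sum_card_eq]

def allocOfOwner (owner : Fin m → Fin n) (i : Fin n) : Finset (Fin m) :=
  univ.filter (owner · = i)

lemma connAlloc_allocOfOwner {owner : Fin m → Fin n} (hmono : Monotone owner) :
    ConnAlloc n m (allocOfOwner owner) := by
  simp only [ConnAlloc, IsConnBundle, allocOfOwner, mem_filter, mem_univ, true_and]
  refine ⟨?_, fun i j hij => disjoint_filter.2 fun e _ hi hj => hij (hi ▸ hj),
    fun e => ⟨_, rfl⟩⟩
  rintro i a rfl c hc b hab hbc
  exact le_antisymm (hc ▸ hmono hbc) (hmono hab)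

lemma utilW_allocOfOwner (v : Fin n → Fin m → ℝ) (owner : Fin m → Fin n) :
    utilW n m v (allocOfOwner owner) = ∑ e, v (owner e) e := by
  rw [← sum_fiberwise univ owner fun e => v (owner e) e]
  refine sum_congr rfl fun i _ => sum_congr rfl fun e he => ?_
  rw [(mem_filter.1 he).2]

end Allocations

/-- For `n = k²`, agent `i < k` receives the block `[i k, (i + 1) k)` and agent `k` the last
item. -/
def blockOwner {k n : ℕ} (hk : 1 < k) (hn : n = k ^ 2) (j : Fin (n + 1)) : Fin n :=
  ⟨j / k, (Nat.div_le_div_right (Nat.le_of_lt_succ j.isLt)).trans_lt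
    (Nat.div_lt_self (by rw [hn]; positivity) hk)⟩

lemma blockOwner_monotone {k n : ℕ} (hk : 1 < k) (hn : n = k ^ 2) : Monotone (blockOwner hk hn) :=
  fun _ _ h => Fin.le_def.2 (Nat.div_le_div_right h)

lemma utilW_blockOwner {k n : ℕ} (hk : 1 < k) (hn : n = k ^ 2) {v : Fin n → Fin (n + 1) → ℝ}
    (hblock : ∀ i : Fin n, (i : ℕ) < k → ∀ j : Fin (n + 1), (i : ℕ) * k ≤ j →
      (j : ℕ) < ((i : ℕ) + 1) * k → v i j = 1 / k)
    (hunif : ∀ i : Fin n, k ≤ (i : ℕ) → ∀ j, v i j = 1 / ((n : ℝ) + 1)) :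
    utilW n (n + 1) v (allocOfOwner (blockOwner hk hn)) = k + 1 / ((n : ℝ) + 1) := by
  have hk0 : 0 < k := by omega
  have hblocks : ∀ j : Fin n, v (blockOwner hk hn j.castSucc) j.castSucc = 1 / k :=
    fun j => hblock _ (Nat.div_lt_of_lt_mul (by simpa [hn, sq] using j.isLt)) _
      (Nat.div_mul_le_self j k) (by simpa [blockOwner, mul_comm] using Nat.lt_mul_div_succ _ hk0)
  have hlast : (blockOwner hk hn (Fin.last n) : ℕ) = k := by
    simp [blockOwner, hn, sq, Nat.mul_div_cancel _ hk0]
  rw [utilW_allocOfOwner, Fin.sum_univ_castSucc, hunif _ hlast.ge]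
  simp only [hblocks, sum_const, card_univ, Fintype.card_fin, nsmul_eq_mul, hn]
  push_cast
  field_simp

lemma Prop1Goods.utilW_le {k n : ℕ} (hk : 0 < k) (hn : n = k ^ 2)
    {v : Fin n → Fin (n + 1) → ℝ}
    (hblock : ∀ i : Fin n, (i : ℕ) < k → ∀ j, v i j ≤ 1 / k)
    (hunif : ∀ i : Fin n, k ≤ (i : ℕ) → ∀ j, v i j = 1 / ((n : ℝ) + 1))
    {A : Fin n → Finset (Fin (n + 1))} (hA : ConnAlloc n (n + 1) A)
    (hP : Prop1Goods n (n + 1) v A) :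
    utilW n (n + 1) v A ≤ 2 - ((k : ℝ) - 1) / ((k : ℝ) * ((n : ℝ) + 1)) := by
  classical
  set T : Finset (Fin n) := {i | (i : ℕ) < k}
  set t := ∑ i ∈ T, #(A i)
  set s := ∑ i ∈ Tᶜ, #(A i)
  have hn0 : (0 : ℝ) < n := by rw [hn]; positivity
  have ht : (t : ℝ) ≤ k + 1 := by
    have hcount := hP.sum_card_add_card_compl_le hA T fun i hi e => by
      rw [hunif i (by simpa [T] using hi)]
      gcongr
      linarith
    have : k ≤ n := hn ▸ Nat.le_self_pow two_ne_zero k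
    rw [card_compl, Fin.card_filter_val_lt, Fintype.card_fin] at hcount
    exact_mod_cast (by omega : t ≤ k + 1)
  have hs : (s : ℝ) = n + 1 - t := by
    rw [eq_sub_iff_add_eq']
    exact_mod_cast (sum_add_sum_compl T _).trans hA.sum_card_eq
  have hW : utilW n (n + 1) v A ≤ t * (1 / k) + s * (1 / ((n : ℝ) + 1)) := by
    rw [utilW, ← sum_add_sum_compl T]
    push_cast [t, s, sum_mul]
    gcongr with i hi i hi
    · exact bundleVal_le_card_mul fun e _ => hblock i (by simpa [T] using hi) e
    · exact bundleVal_le_card_mul fun e _ => (hunif i (by simpa [T] using hi) e).le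
  refine hW.trans ?_
  rw [hs, hn, ← sub_nonneg]
  push_cast
  have hk' : (0 : ℝ) < k := by exact_mod_cast hk
  field_simp
  -- the slack is `(k + 1 - t) (k² - k + 1)`
  nlinarith [mul_nonneg (sub_nonneg.2 ht) (by nlinarith : (0 : ℝ) ≤ (k : ℝ) ^ 2 - k + 1)]

/-- The hard instance for Goods | Utilitarian | PROP1: with `n = k²`
agents and `n + 1` goods as described, `OPT_U ≥ k + 1/(n+1)`, while every connected
PROP1 allocation has utilitarian welfare at most `2 - (k-1)/(k(n+1))`. -/
theorem goods_utilitarian_prop1_lower_bound (k : ℕ) (hk : 2 ≤ k) (n : ℕ) (hn : n = k ^ 2)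
    (v : Fin n → Fin (n + 1) → ℝ)
    (hv1 : ∀ i : Fin n, (i : ℕ) < k → ∀ j : Fin (n + 1),
      v i j = if (i : ℕ) * k ≤ (j : ℕ) ∧ (j : ℕ) < ((i : ℕ) + 1) * k
              then 1 / (k : ℝ) else 0)
    (hv2 : ∀ i : Fin n, k ≤ (i : ℕ) → ∀ j : Fin (n + 1), v i j = 1 / ((n : ℝ) + 1)) :
    (k : ℝ) + 1 / ((n : ℝ) + 1) ≤ optU n (n + 1) v ∧
    ∀ A : Fin n → Finset (Fin (n + 1)), ConnAlloc n (n + 1) A →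
      Prop1Goods n (n + 1) v A →
      utilW n (n + 1) v A ≤ 2 - ((k : ℝ) - 1) / ((k : ℝ) * ((n : ℝ) + 1)) := by
  refine ⟨?_, fun A hA hP => hP.utilW_le (by omega) hn ?_ hv2 hA⟩
  · have hblock : ∀ i : Fin n, (i : ℕ) < k → ∀ j : Fin (n + 1), (i : ℕ) * k ≤ j →
        (j : ℕ) < ((i : ℕ) + 1) * k → v i j = 1 / k := fun i hi j hij hji => by
      rw [hv1 i hi j, if_pos ⟨hij, hji⟩]
    rw [← utilW_blockOwner hk hn hblock hv2]
    exact utilW_le_optU v (connAlloc_allocOfOwner (blockOwner_monotone hk hn))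
  · intro i hi j
    rw [hv1 i hi j]
    split_ifs
    exacts [le_rfl, by positivity]
end
end

section
/- For every fair-chores instance with n >= 3 agents, there exists a connected MMS allocation A with egalitarian welfare EW(A) >= (n/2) * OPT_E (note that OPT_E <= 0, so this says the loss factor in egalitarian welfare is at most n/2). Hence the price of MMS with respect to egalitarian welfare for chores is at most n/2. -/
open Finset

noncomputable section

/-!
If the egalitarian optimum `A*` gives every agent at least her maximin share, it is the
allocation sought. Otherwise `OPT_E < MMS_i ≤ -1/n` for some agent `i`, so the target
`t = (n/2) · OPT_E` satisfies `2t ≤ -1`. Give each agent the threshold `max (MMS_i, t)`.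
Agents with `MMS_i < t` then accept one of any two disjoint bundles, since two values below `t`
would sum to less than `-1`; each of the remaining (demanding) agents can cut the line into `n` connected
bundles she accepts.

A moving knife serves everybody: while at least two demanding agents remain, the one whose first
piece ends furthest to the right takes it and leaves, and every other demanding agent still
splits the rest of the line into one piece per remaining agent. Once a single demanding agent
is left, every other agent rejects at most one of her pieces, and Hall's theorem matches
the pieces to the agents.
-/

namespace Chores

open Function

variable {m : ℕ}

lemma isConnBundle_empty : IsConnBundle (∅ : Finset (Fin m)) := by
  simp [IsConnBundle]

lemma IsConnBundle.filter_lt {P : Finset (Fin m)} (hP : IsConnBundle P) (y : Fin m) :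
    IsConnBundle (P.filter (y < ·)) := by
  simp only [IsConnBundle, mem_filter] at *
  exact fun a ha c hc b hab hbc => ⟨hP a ha.1 c hc.1 b hab hbc, ha.2.trans_le hab⟩

lemma IsConnBundle.eq_filter_le_max' {P S : Finset (Fin m)} (hP : IsConnBundle P)
    (hPS : P ⊆ S) (hS : S.Nonempty) (hmin : S.min' hS ∈ P) :
    P = S.filter (· ≤ P.max' ⟨_, hmin⟩) := by
  ext e
  simp only [mem_filter]
  exact ⟨fun he => ⟨hPS he, P.le_max' e he⟩,
    fun ⟨heS, hle⟩ => hP _ hmin _ (P.max'_mem _) e (S.min'_le e heS) hle⟩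

section Partition

variable {ι : Type*}

def IsConnPartition (J : Finset ι) (S : Finset (Fin m)) (W : ι → Finset (Fin m)) : Prop :=
  (∀ j ∈ J, IsConnBundle (W j)) ∧ (J : Set ι).PairwiseDisjoint W ∧ J.biUnion W = S

lemma isConnPartition_univ_iff {n : ℕ} {A : Fin n → Finset (Fin m)} :
    IsConnPartition univ univ A ↔ ConnAlloc n m A := by
  simp [IsConnPartition, ConnAlloc, Set.PairwiseDisjoint, Set.Pairwise, onFun,
    eq_univ_iff_forall]

lemma isConnPartition_empty (J : Finset ι) :
    IsConnPartition J (∅ : Finset (Fin m)) (fun _ => ∅) :=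
  ⟨fun _ _ => isConnBundle_empty, fun _ _ _ _ _ => disjoint_bot_left,
    by simp [← not_nonempty_iff_eq_empty, biUnion_nonempty]⟩

lemma IsConnPartition.subset {J : Finset ι} {S : Finset (Fin m)} {W : ι → Finset (Fin m)}
    (hW : IsConnPartition J S W) {j : ι} (hj : j ∈ J) : W j ⊆ S :=
  hW.2.2 ▸ subset_biUnion_of_mem W hj

lemma IsConnPartition.erase_filter_lt [DecidableEq ι] {J : Finset ι} {S : Finset (Fin m)}
    {W : ι → Finset (Fin m)} (hW : IsConnPartition J S W) {j₀ : ι} {y : Fin m}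
    (hy : ∀ e ∈ W j₀, e ≤ y) :
    IsConnPartition (J.erase j₀) (S.filter (y < ·)) (fun j => (W j).filter (y < ·)) := by
  obtain ⟨hconn, hdisj, hcover⟩ := hW
  refine ⟨fun j hj => IsConnBundle.filter_lt (hconn j (mem_of_mem_erase hj)) y, ?_, ?_⟩
  · exact (hdisj.subset (coe_subset.mpr (erase_subset _ _))).mono fun j => filter_subset _ _
  · ext e
    simp only [mem_biUnion, mem_filter, mem_erase, ← hcover]
    constructor
    · rintro ⟨j, ⟨-, hj⟩, he, hye⟩
      exact ⟨⟨j, hj, he⟩, hye⟩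
    · rintro ⟨⟨j, hj, he⟩, hye⟩
      refine ⟨j, ⟨?_, hj⟩, he, hye⟩
      rintro rfl
      exact (hy e he).not_gt hye

lemma IsConnPartition.insert [DecidableEq ι] {T : Finset ι} {S : Finset (Fin m)}
    {B : ι → Finset (Fin m)} (hB : IsConnPartition T S B) {d : ι} (hd : d ∉ T)
    {P : Finset (Fin m)} (hP : IsConnBundle P) (hPS : Disjoint P S) :
    IsConnPartition (insert d T) (P ∪ S) (update B d P) := by
  obtain ⟨hconn, hdisj, hcover⟩ := hB
  have hBT : ∀ i ∈ T, update B d P i = B i :=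
    fun i hi => update_of_ne (ne_of_mem_of_not_mem hi hd) _ _
  refine ⟨?_, ?_, ?_⟩
  · simp only [forall_mem_insert, update_self]
    exact ⟨hP, fun i hi => hBT i hi ▸ hconn i hi⟩
  · rw [coe_insert]
    refine (hdisj.mono_on fun i hi => (hBT i hi).le).insert_of_notMem hd fun j hj => ?_
    rw [update_self, hBT j hj]
    exact hPS.mono_right (hcover ▸ subset_biUnion_of_mem B hj)
  · rw [biUnion_insert, update_self, biUnion_congr rfl hBT, hcover]

end Partition

lemma exists_equiv_rel_of_rejects_at_most_one {α β : Type*} [Fintype α] [Fintype β]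
    (r : α → β → Prop) (hcard : Fintype.card α = Fintype.card β) (d : α) (hd : ∀ b, r d b)
    (hr : ∀ a ≠ d, ∀ b b', b ≠ b' → r a b ∨ r a b') : ∃ f : α ≃ β, ∀ a, r a (f a) := by
  classical
  suffices hall : ∀ A : Finset α, #A ≤ #{b | ∃ a ∈ A, r a b} by
    obtain ⟨f, hf, hfr⟩ := (Fintype.all_card_le_filter_rel_iff_exists_injective r).mp hall
    exact ⟨.ofBijective f ((Fintype.bijective_iff_injective_and_card f).mpr ⟨hf, hcard⟩), hfr⟩
  intro A
  by_cases hdA : d ∈ A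
  · have : ({b | ∃ a ∈ A, r a b} : Finset β) = univ :=
      eq_univ_of_forall fun b => mem_filter.mpr ⟨mem_univ b, d, hdA, hd b⟩
    rw [this, card_univ, ← hcard]
    exact card_le_univ A
  rcases A.eq_empty_or_nonempty with rfl | ⟨a, ha⟩
  · simp
  have hrej : #{b | ¬ r a b} ≤ 1 := card_le_one.mpr fun b hb b' hb' => by
    by_contra hne
    exact (hr a (ne_of_mem_of_not_mem ha hdA) b b' hne).elim (mem_filter.mp hb).2
      (mem_filter.mp hb').2
  have hacc : #{b | r a b} ≤ #{b | ∃ a ∈ A, r a b} :=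
    card_le_card fun b hb => mem_filter.mpr ⟨mem_univ b, a, ha, (mem_filter.mp hb).2⟩
  have hA : #A ≤ #(univ.erase d) :=
    card_le_card fun a ha => mem_erase.mpr ⟨ne_of_mem_of_not_mem ha hdA, mem_univ a⟩
  have hsplit := card_filter_add_card_filter_not (s := univ) (fun b => r a b)
  rw [card_erase_of_mem (mem_univ d), card_univ] at hA
  rw [card_univ] at hsplit
  omega

section Knife

variable {α ι : Type*}

def HasAcceptableSplit (ι : Type*) (accept : Finset (Fin m) → Prop) (S : Finset (Fin m))
    (k : ℕ) : Prop :=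
  ∃ (J : Finset ι) (W : ι → Finset (Fin m)), #J = k ∧ IsConnPartition J S W ∧
    ∀ j ∈ J, accept (W j)

def AcceptsOneOfDisjoint (accept : Finset (Fin m) → Prop) : Prop :=
  ∀ J J' : Finset (Fin m), Disjoint J J' → accept J ∨ accept J'

lemma AcceptsOneOfDisjoint.accept_empty {accept : Finset (Fin m) → Prop}
    (h : AcceptsOneOfDisjoint accept) : accept ∅ :=
  (h ∅ ∅ (disjoint_empty_left _)).elim id id

lemma HasAcceptableSplit.accept_empty {accept : Finset (Fin m) → Prop} {k : ℕ}
    (h : HasAcceptableSplit ι accept ∅ k) (hk : 0 < k) : accept ∅ := by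
  obtain ⟨J, W, rfl, hW, hacc⟩ := h
  obtain ⟨j, hj⟩ := card_pos.mp hk
  exact subset_empty.mp (hW.subset hj) ▸ hacc j hj

lemma HasAcceptableSplit.exists_prefix [DecidableEq ι] {accept : Finset (Fin m) → Prop}
    (hanti : Antitone accept) {S : Finset (Fin m)} {k : ℕ}
    (h : HasAcceptableSplit ι accept S k) (hS : S.Nonempty) :
    ∃ y, IsConnBundle (S.filter (· ≤ y)) ∧ accept (S.filter (· ≤ y)) ∧
      ∀ y', y ≤ y' → HasAcceptableSplit ι accept (S.filter (y' < ·)) (k - 1) := by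
  obtain ⟨J, W, rfl, hW, hacc⟩ := h
  obtain ⟨j₀, hj₀, hmin⟩ := mem_biUnion.mp (hW.2.2.superset (S.min'_mem hS))
  have hprefix := IsConnBundle.eq_filter_le_max' (hW.1 j₀ hj₀) (hW.subset hj₀) hS hmin
  refine ⟨_, hprefix ▸ hW.1 j₀ hj₀, hprefix ▸ hacc j₀ hj₀, fun y' hy' =>
    ⟨J.erase j₀, _, card_erase_of_mem hj₀,
      hW.erase_filter_lt fun e he => ((W j₀).le_max' e he).trans hy',
      fun j hj => hanti (filter_subset _ _) (hacc j (mem_of_mem_erase hj))⟩⟩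

lemma HasAcceptableSplit.exists_partition (accept : α → Finset (Fin m) → Prop)
    {T : Finset α} {S : Finset (Fin m)} {d : α} (hdT : d ∈ T)
    (hd : HasAcceptableSplit ι (accept d) S #T)
    (hrel : ∀ z ∈ T, z ≠ d → AcceptsOneOfDisjoint (accept z)) :
    ∃ B : α → Finset (Fin m), IsConnPartition T S B ∧ ∀ i ∈ T, accept i (B i) := by
  classical
  obtain ⟨J, W, hJ, ⟨hconn, hdisj, hcover⟩, hacc⟩ := hd
  obtain ⟨f, hf⟩ := exists_equiv_rel_of_rejects_at_most_one
    (fun (z : T) (j : J) => accept z (W j)) (by simp [hJ]) ⟨d, hdT⟩ (fun j => hacc j j.2)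
    fun z hz j j' hjj' => hrel z z.2 (fun h => hz (Subtype.ext h)) _ _
      (hdisj j.2 j'.2 (Subtype.coe_injective.ne hjj'))
  refine ⟨fun i => if hi : i ∈ T then W (f ⟨i, hi⟩) else ∅, ⟨?_, ?_, ?_⟩, ?_⟩
  · intro i hi
    simpa [hi] using hconn _ (f ⟨i, hi⟩).2
  · intro i hi i' hi' hii'
    simp only [onFun, dif_pos (mem_coe.mp hi), dif_pos (mem_coe.mp hi')]
    exact hdisj (f _).2 (f _).2 (Subtype.coe_injective.ne (f.injective.ne (by simpa using hii')))
  · ext e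
    simp only [mem_biUnion, ← hcover]
    constructor
    · rintro ⟨i, hi, he⟩
      exact ⟨f ⟨i, hi⟩, (f ⟨i, hi⟩).2, by simpa [hi] using he⟩
    · rintro ⟨j, hj, he⟩
      refine ⟨f.symm ⟨j, hj⟩, (f.symm ⟨j, hj⟩).2, ?_⟩
      simpa using he
  · intro i hi
    simpa [hi] using hf ⟨i, hi⟩

theorem exists_accepted_partition [DecidableEq α] [DecidableEq ι]
    (accept : α → Finset (Fin m) → Prop) (hanti : ∀ i, Antitone (accept i))
    (T D : Finset α) (S : Finset (Fin m)) (hD : D.Nonempty) (hDT : D ⊆ T)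
    (hsplit : ∀ d ∈ D, HasAcceptableSplit ι (accept d) S #T)
    (hrel : ∀ z ∈ T, z ∉ D → AcceptsOneOfDisjoint (accept z)) :
    ∃ B : α → Finset (Fin m), IsConnPartition T S B ∧ ∀ i ∈ T, accept i (B i) := by
  induction D using Finset.strongInduction generalizing T S with
  | H D ih =>
  rcases hD.exists_eq_singleton_or_nontrivial with ⟨d, rfl⟩ | hnt
  · exact (hsplit d (mem_singleton_self d)).exists_partition accept
      (hDT (mem_singleton_self d)) fun z hz hzd => hrel z hz (by simpa using hzd)
  rcases S.eq_empty_or_nonempty with rfl | hS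
  · refine ⟨fun _ => ∅, isConnPartition_empty T, fun i hi => ?_⟩
    by_cases hiD : i ∈ D
    · exact (hsplit i hiD).accept_empty (card_pos.mpr ⟨i, hi⟩)
    · exact (hrel i hi hiD).accept_empty
  have : Nonempty (Fin m) := hS.to_subtype.map Subtype.val
  choose! y hyconn hyacc hysplit using fun d hd => (hsplit d hd).exists_prefix (hanti d) hS
  -- The first pieces of all demanding agents lie inside that of `d`, which reaches furthest,
  -- so their remaining pieces still split what is left after `d` takes hers.
  obtain ⟨d, hdD, hmax⟩ := D.exists_max_image y hD
  obtain ⟨B, hB, hBacc⟩ := ih (D.erase d) (erase_ssubset hdD) (T.erase d)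
    (S.filter (y d < ·)) hnt.erase_nonempty (erase_subset_erase d hDT)
    (fun d' hd' => card_erase_of_mem (hDT hdD) ▸
      hysplit d' (mem_of_mem_erase hd') _ (hmax d' (mem_of_mem_erase hd')))
    (fun z hz hzD => hrel z (mem_of_mem_erase hz)
      fun h => hzD (mem_erase.mpr ⟨ne_of_mem_erase hz, h⟩))
  have hpart := hB.insert (notMem_erase d T) (hyconn d hdD)
    (disjoint_filter.mpr fun e _ hle hlt => (not_lt.mpr hle) hlt)
  rw [insert_erase (hDT hdD), filter_union_right] at hpart
  refine ⟨_, by simpa [le_or_gt] using hpart, fun i hi => ?_⟩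
  rcases eq_or_ne i d with rfl | hid
  · simpa using hyacc i hdD
  · simpa [hid] using hBacc i (mem_erase.mpr ⟨hid, hi⟩)

end Knife

section Valuation

variable {n : ℕ} {v : Fin m → ℝ}

lemma bundleVal_antitone (hv : ∀ e, v e ≤ 0) : Antitone (bundleVal v) :=
  fun _ _ hST => sum_le_sum_of_subset_of_nonpos' hST fun e _ _ => hv e

lemma bundleVal_nonpos (hv : ∀ e, v e ≤ 0) (S : Finset (Fin m)) : bundleVal v S ≤ 0 :=
  sum_nonpos fun e _ => hv e

lemma acceptsOneOfDisjoint_of_two_mul_le (hv : ∀ e, v e ≤ 0) (hnorm : bundleVal v univ = -1)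
    {t : ℝ} (ht : 2 * t ≤ -1) : AcceptsOneOfDisjoint fun J => t ≤ bundleVal v J := by
  intro J J' hJJ'
  by_contra! hlt
  have hunion : bundleVal v (J ∪ J') = bundleVal v J + bundleVal v J' := sum_union hJJ'
  have := bundleVal_antitone hv (subset_univ (J ∪ J'))
  linarith [hlt.1, hlt.2]

lemma sum_bundleVal_of_connAlloc (v : Fin m → ℝ) {A : Fin n → Finset (Fin m)}
    (hA : ConnAlloc n m A) : ∑ i, bundleVal v (A i) = bundleVal v univ := by
  obtain ⟨-, hdisj, hcover⟩ := isConnPartition_univ_iff.mpr hA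
  rw [bundleVal, ← hcover, sum_biUnion hdisj]
  rfl

lemma iInf_bundleVal_le_div (hn : 0 < n) {A : Fin n → Finset (Fin m)} (hA : ConnAlloc n m A) :
    (⨅ j, bundleVal v (A j)) ≤ bundleVal v univ / n := by
  have : ∑ _j : Fin n, (⨅ j, bundleVal v (A j)) ≤ ∑ j, bundleVal v (A j) :=
    sum_le_sum fun j _ => ciInf_le (Set.finite_range _).bddBelow j
  rw [sum_const, card_fin, nsmul_eq_mul, sum_bundleVal_of_connAlloc v hA] at this
  rw [le_div_iff₀ (by positivity)]
  linarith

lemma exists_connAlloc (hn : 0 < n) : ∃ A, ConnAlloc n m A := by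
  classical
  refine ⟨update (fun _ => ∅) ⟨0, hn⟩ univ, fun i => ?_, fun i j hij => ?_,
    fun e => ⟨⟨0, hn⟩, by simp⟩⟩
  · rcases eq_or_ne i ⟨0, hn⟩ with rfl | hi
    · simp [IsConnBundle]
    · simpa [hi] using isConnBundle_empty
  · rcases eq_or_ne i ⟨0, hn⟩ with rfl | hi
    · simp [update_of_ne hij.symm]
    · simp [hi]

lemma exists_connAlloc_eq_sSup (hn : 0 < n) (f : (Fin n → Finset (Fin m)) → ℝ) :
    ∃ A, ConnAlloc n m A ∧ f A = sSup {x | ∃ A, ConnAlloc n m A ∧ x = f A} := by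
  obtain ⟨A₀, hA₀⟩ := exists_connAlloc (m := m) hn
  have hfin : {x | ∃ A, ConnAlloc n m A ∧ x = f A}.Finite :=
    (Set.finite_range f).subset fun _ ⟨A, _, hx⟩ => ⟨A, hx.symm⟩
  obtain ⟨A, hA, hsup⟩ := Set.Nonempty.csSup_mem (s := {x | ∃ A, ConnAlloc n m A ∧ x = f A})
    ⟨_, A₀, hA₀, rfl⟩ hfin
  exact ⟨A, hA, hsup.symm⟩

lemma mmsVal_le_neg_inv (hn : 0 < n) (hnorm : bundleVal v univ = -1) :
    mmsVal n m v ≤ -1 / n := by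
  obtain ⟨A, hA, hmms⟩ := exists_connAlloc_eq_sSup hn fun A => ⨅ j, bundleVal v (A j)
  rw [mmsVal, ← hmms, ← hnorm]
  exact iInf_bundleVal_le_div hn hA

lemma hasAcceptableSplit_of_le_mmsVal (hn : 0 < n) {τ : ℝ} (hτ : τ ≤ mmsVal n m v) :
    HasAcceptableSplit (Fin n) (fun J => τ ≤ bundleVal v J) univ n := by
  obtain ⟨A, hA, hmms⟩ := exists_connAlloc_eq_sSup hn fun A => ⨅ j, bundleVal v (A j)
  refine ⟨univ, A, card_fin n, isConnPartition_univ_iff.mpr hA, fun j _ => ?_⟩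
  rw [mmsVal, ← hmms] at hτ
  exact hτ.trans (ciInf_le (Set.finite_range _).bddBelow j)

end Valuation

lemma exists_connAlloc_egalW_eq_optE {n : ℕ} (hn : 0 < n) (v : Fin n → Fin m → ℝ) :
    ∃ A, ConnAlloc n m A ∧ egalW n m v A = optE n m v :=
  exists_connAlloc_eq_sSup hn (egalW n m v)

end Chores

open Chores in
/-- For every fair-chores instance with `n ≥ 3` agents, there exists a
connected MMS allocation whose egalitarian welfare is at least `(n/2) · OPT_E`
(note `OPT_E ≤ 0`). -/
theorem chores_egalitarian_mms_exists (n m : ℕ) (hn : 3 ≤ n)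
    (v : Fin n → Fin m → ℝ)
    (hneg : ∀ i j, v i j ≤ 0)
    (hnorm : ∀ i, bundleVal (v i) Finset.univ = -1) :
    ∃ A : Fin n → Finset (Fin m), ConnAlloc n m A ∧
      (∀ i, mmsVal n m (v i) ≤ bundleVal (v i) (A i)) ∧
      ((n : ℝ) / 2) * optE n m v ≤ egalW n m v A := by
  have hn0 : 0 < n := by omega
  have : NeZero n := ⟨hn0.ne'⟩
  obtain ⟨Aopt, hAopt, hopt⟩ := exists_connAlloc_egalW_eq_optE hn0 v
  have hAopt_ge : ∀ i, optE n m v ≤ bundleVal (v i) (Aopt i) :=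
    fun i => hopt ▸ ciInf_le (Set.finite_range _).bddBelow i
  have hopt_nonpos : optE n m v ≤ 0 := (hAopt_ge ⟨0, hn0⟩).trans (bundleVal_nonpos (hneg _) _)
  have hn3 : (3 : ℝ) ≤ n := by exact_mod_cast hn
  have ht : (n : ℝ) / 2 * optE n m v ≤ optE n m v := by nlinarith
  set t := (n : ℝ) / 2 * optE n m v with ht_def
  rcases forall_or_exists_not (fun i => mmsVal n m (v i) ≤ optE n m v) with hall | ⟨i₀, hi₀⟩
  · exact ⟨Aopt, hAopt, fun i => (hall i).trans (hAopt_ge i), hopt ▸ ht⟩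
  rw [not_le] at hi₀
  have h2t : 2 * t ≤ -1 := by
    have := hi₀.trans_le (mmsVal_le_neg_inv hn0 (hnorm i₀))
    rw [lt_div_iff₀ (by positivity)] at this
    linarith [ht_def]
  obtain ⟨B, hB, hBacc⟩ := exists_accepted_partition (ι := Fin n)
    (fun i J => max (mmsVal n m (v i)) t ≤ bundleVal (v i) J)
    (fun i _ _ hJJ' h => h.trans (bundleVal_antitone (hneg i) hJJ'))
    univ {i | t ≤ mmsVal n m (v i)} univ ⟨i₀, by simpa using ht.trans hi₀.le⟩ (subset_univ _)
    (fun d hd => (card_fin n).symm ▸ hasAcceptableSplit_of_le_mmsVal hn0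
      (max_le le_rfl (mem_filter.mp hd).2))
    (fun z _ hz => by
      rw [max_eq_right (not_le.mp (by simpa using hz)).le]
      exact acceptsOneOfDisjoint_of_two_mul_le (hneg z) (hnorm z) h2t)
  exact ⟨B, isConnPartition_univ_iff.mp hB,
    fun i => (le_max_left _ _).trans (hBacc i (mem_univ i)),
    le_ciInf fun i => (le_max_right _ _).trans (hBacc i (mem_univ i))⟩
end
end
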